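/- arXiv:1812.04749 — 8 statements merged into one kernel-verified Lean document; each statement's English description precedes it below -/
import Mathlib

section
/- Let A be a nonempty finite alphabet. If S is a product-free subset of the free semigroup F_A, then the upper Banach density of S is at most 1/2. -/
open Filter

/-- Density of `S` in the layer of words of length `n`:  `|S ∩ F_A(n)| / |A|^n`. -/
noncomputable def layerDensity (A : Type*) [Fintype A] (S : Set (List A)) (n : ℕ) : ℝ :=
  ({w ∈ S | w.length = n} : Set (List A)).ncard / (Fintype.card A : ℝ) ^ n

/-- `S` is product-free under concatenation. -/
def ProductFree {A : Type*} (S : Set (List A)) : Prop := ∀ x ∈ S, ∀ y ∈ S, x ++ y ∉ S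

/-- Upper asymptotic density: `limsup_{n → ∞} (∑_{i=1}^{n} d_S(i)) / n`. -/
noncomputable def upperAsympDensity (A : Type*) [Fintype A] (S : Set (List A)) : ℝ :=
  Filter.limsup (fun n : ℕ => (∑ i ∈ Finset.Icc 1 n, layerDensity A S i) / n) Filter.atTop

/-- Upper Banach density: `limsup_{n - m → ∞} (∑_{i=m}^{n} d_S(i)) / (n - m + 1)`. -/
noncomputable def upperBanachDensity (A : Type*) [Fintype A] (S : Set (List A)) : ℝ :=
  Filter.limsup
    (fun p : ℕ × ℕ => (∑ i ∈ Finset.Icc p.1 p.2, layerDensity A S i) / ((p.2 - p.1 : ℕ) + 1))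
    (Filter.comap (fun p : ℕ × ℕ => p.2 - p.1) Filter.atTop)

/-- `d_S(n; L)`: density in the layer of length-`n` words of the set of words of `S` of
length `n` having no prefix in `S` of length belonging to `L`. -/
noncomputable def restrictedDensity (A : Type*) [Fintype A] (S : Set (List A)) (n : ℕ)
    (L : Set ℕ) : ℝ :=
  ({w | w ∈ S ∧ w.length = n ∧ ∀ x ∈ S, x.length ∈ L → ¬ x <+: w} : Set (List A)).ncard /
    (Fintype.card A : ℝ) ^ n

/-- The odd-occurrence set `O_Γ`: words in which the total number of occurrences of
symbols from `Γ` is odd. -/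
def oddOcc {A : Type*} [DecidableEq A] (Γ : Finset A) : Set (List A) :=
  {w | Odd (w.countP (fun a => decide (a ∈ Γ)))}

section PFAuxSection
open Finset
namespace PFaux2
variable {A : Type*} [Fintype A]

variable {A : Type*} [Fintype A]

lemma layer_finite (n : ℕ) : {w : List A | w.length = n}.Finite := List.finite_length_eq A n

lemma layer_ncard (n : ℕ) : {w : List A | w.length = n}.ncard = Fintype.card A ^ n := by
  classical
  have e : {w : List A | w.length = n} ≃ (Fin n → A) := Equiv.vectorEquivFin A n
  rw [← Nat.card_coe_set_eq, Nat.card_congr e]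
  simp [Nat.card_eq_fintype_card]

lemma sub_layer_finite {P : Set (List A)} {n : ℕ} (h : ∀ w ∈ P, w.length = n) : P.Finite :=
  (layer_finite n).subset (fun w hw => h w hw)

lemma sub_layer_ncard {P : Set (List A)} {n : ℕ} (h : ∀ w ∈ P, w.length = n) :
    P.ncard ≤ Fintype.card A ^ n := by
  rw [← layer_ncard (A := A) n]
  exact Set.ncard_le_ncard (fun w hw => h w hw) (layer_finite n)

lemma append_ncard {P Q : Set (List A)} {l m : ℕ} (hP : ∀ w ∈ P, w.length = l)
    (hQ : ∀ w ∈ Q, w.length = m) :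
    ((fun p : List A × List A => p.1 ++ p.2) '' (P ×ˢ Q)).ncard = P.ncard * Q.ncard := by
  rw [Set.ncard_image_of_injOn, ← Nat.card_coe_set_eq,
    Nat.card_congr (Equiv.Set.prod P Q), Nat.card_prod, Nat.card_coe_set_eq,
    Nat.card_coe_set_eq]
  rintro ⟨x, y⟩ ⟨hx, hy⟩ ⟨x', y'⟩ ⟨hx', hy'⟩ hxy
  have hl : x.length = x'.length := by rw [hP x hx, hP x' hx']
  obtain ⟨h1, h2⟩ := List.append_inj hxy hl
  exact Prod.ext h1 h2




/-- minimal words of `S`: no proper prefix in `S`. -/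
def Mset (S : Set (List A)) : Set (List A) := {x | x ∈ S ∧ ∀ u ∈ S, u <+: x → u = x}

lemma mset_disj {S : Set (List A)} {l l' : ℕ} (hll : l < l') {w : List A}
    (h : w ∈ (fun p : List A × List A => p.1 ++ p.2) ''
      (({x ∈ Mset S | x.length = l}) ×ˢ {y : List A | y.length = n}))
    (h' : w ∈ (fun p : List A × List A => p.1 ++ p.2) ''
      (({x ∈ Mset S | x.length = l'}) ×ˢ {y : List A | y.length = m})) : False := by
  obtain ⟨⟨x, y⟩, hmem, rfl⟩ := h
  obtain ⟨⟨x', y'⟩, hmem', hEq⟩ := h'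
  obtain ⟨hxM, hxl⟩ : x ∈ Mset S ∧ x.length = l := hmem.1
  obtain ⟨hx'M, hx'l⟩ : x' ∈ Mset S ∧ x'.length = l' := hmem'.1
  have hpre : x' <+: x ++ y := ⟨y', hEq⟩
  have hpre2 : x <+: x' := by
    refine List.prefix_of_prefix_length_le ⟨y, rfl⟩ hpre ?_
    simp only [hxl, hx'l]; omega
  have hxx : x = x' := hx'M.2 x hxM.1 hpre2
  rw [← hxx, hxl] at hx'l
  omega

lemma key_b (S : Set (List A)) (n : ℕ) :
    ∑ l ∈ Icc 1 n, ({x ∈ Mset S | x.length = l}).ncard * Fintype.card A ^ (n - l)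
      ≤ Fintype.card A ^ n := by
  classical
  set E : ℕ → Set (List A) := fun l => (fun p : List A × List A => p.1 ++ p.2) ''
      (({x ∈ Mset S | x.length = l}) ×ˢ {y : List A | y.length = n - l}) with hE
  have hlen : ∀ l, ∀ w ∈ E l, w.length = l + (n - l) := by
    rintro l w ⟨⟨x, y⟩, ⟨⟨-, hxl⟩, hy⟩, rfl⟩
    simp [hxl, hy.out]
  have hEfin : ∀ l, (E l).Finite := fun l => sub_layer_finite (hlen l)
  set fE : ℕ → Finset (List A) := fun l => (hEfin l).toFinset with hfE
  have hdisj : ((Icc 1 n : Finset ℕ) : Set ℕ).PairwiseDisjoint fE := by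
    intro l hl l' hl' hne
    refine Finset.disjoint_left.mpr fun w hw hw' => ?_
    rw [hfE, Set.Finite.mem_toFinset] at hw hw'
    rcases lt_or_gt_of_ne hne with h | h
    · exact mset_disj h hw hw'
    · exact mset_disj h hw' hw
  have hcard : ∀ l ∈ Icc 1 n, (fE l).card =
      ({x ∈ Mset S | x.length = l}).ncard * Fintype.card A ^ (n - l) := by
    intro l hl
    show (hEfin l).toFinset.card = _
    rw [← Set.ncard_eq_toFinset_card _ (hEfin l), hE]
    rw [append_ncard (fun x hx => hx.2) (fun y hy => hy.out), layer_ncard]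
  have hsub : (Icc 1 n).biUnion fE ⊆ (layer_finite (A := A) n).toFinset := by
    intro w hw
    simp only [Finset.mem_biUnion] at hw
    obtain ⟨l, hl, hwl⟩ := hw
    rw [Set.Finite.mem_toFinset]
    rw [hfE, Set.Finite.mem_toFinset] at hwl
    have := hlen l w hwl
    simp only [Set.mem_setOf_eq, this]
    rw [Finset.mem_Icc] at hl; omega
  calc ∑ l ∈ Icc 1 n, ({x ∈ Mset S | x.length = l}).ncard * Fintype.card A ^ (n - l)
      = ∑ l ∈ Icc 1 n, (fE l).card := (Finset.sum_congr rfl fun l hl => (hcard l hl).symm)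
    _ = ((Icc 1 n).biUnion fE).card := (Finset.card_biUnion (fun l hl l' hl' h => hdisj hl hl' h)).symm
    _ ≤ ((layer_finite (A := A) n).toFinset).card := Finset.card_le_card hsub
    _ = Fintype.card A ^ n := by
        rw [← Set.ncard_eq_toFinset_card _ (layer_finite (A := A) n), layer_ncard]

lemma cover {S : Set (List A)} (hS : [] ∉ S) (hPF : ProductFree S) {n : ℕ} {w : List A}
    (hw : w ∈ S) (hwl : w.length = n) :
    w ∈ {x ∈ Mset S | x.length = n} ∨ ∃ l ∈ Icc 1 (n - 1),
      w ∈ (fun p : List A × List A => p.1 ++ p.2) ''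
        (({x ∈ Mset S | x.length = l}) ×ˢ {y : List A | y.length = n - l ∧ y ∉ S}) := by
  classical
  have hex : ∃ j, w.take j ∈ S := ⟨n, by rw [← hwl, List.take_length]; exact hw⟩
  set j := Nat.find hex with hjdef
  have hjS : w.take j ∈ S := Nat.find_spec hex
  have hjmin : ∀ m, m < j → w.take m ∉ S := fun m hm => Nat.find_min hex hm
  have hj1 : 1 ≤ j := by
    rcases Nat.eq_zero_or_pos j with h | h
    · exfalso; rw [h, List.take_zero] at hjS; exact hS hjS
    · exact h
  have hjn : j ≤ n := Nat.find_le (by rw [← hwl, List.take_length]; exact hw)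
  have hxlen : (w.take j).length = j := by
    rw [List.length_take]; omega
  have hxM : w.take j ∈ Mset S := by
    refine ⟨hjS, fun u hu hupre => ?_⟩
    have hup : u <+: w := hupre.trans (List.take_prefix j w)
    have hut : u = w.take u.length := List.prefix_iff_eq_take.mp hup
    have hle : ¬ u.length < j := fun hlt => hjmin u.length hlt (hut ▸ hu)
    have hul : u.length = (w.take j).length := by
      have := hupre.length_le
      omega
    exact hupre.eq_of_length hul
  rcases eq_or_lt_of_le hjn with heq | hlt
  · left
    have : w.take j = w := by rw [heq, ← hwl, List.take_length]
    rw [this] at hxM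
    exact ⟨hxM, hwl⟩
  · right
    refine ⟨j, by rw [mem_Icc]; omega, ⟨(w.take j, w.drop j), ⟨⟨hxM, hxlen⟩, ?_, ?_⟩,
      List.take_append_drop j w⟩⟩
    · rw [List.length_drop, hwl]
    · intro hd
      exact hPF _ hjS _ hd (by rw [List.take_append_drop]; exact hw)

lemma sn_le (S : Set (List A)) (n : ℕ) :
    ({w ∈ S | w.length = n}).ncard ≤ Fintype.card A ^ n := by
  rw [← layer_ncard (A := A) n]
  exact Set.ncard_le_ncard (fun w hw => hw.2) (layer_finite n)


lemma key_c {S : Set (List A)} (hS : [] ∉ S) (hPF : ProductFree S) (n : ℕ) :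
    ({w ∈ S | w.length = n}).ncard ≤ ({x ∈ Mset S | x.length = n}).ncard +
      ∑ l ∈ Icc 1 (n - 1), ({x ∈ Mset S | x.length = l}).ncard *
        (Fintype.card A ^ (n - l) - ({w ∈ S | w.length = n - l}).ncard) := by
  classical
  set D : ℕ → Set (List A) := fun l => (fun p : List A × List A => p.1 ++ p.2) ''
      (({x ∈ Mset S | x.length = l}) ×ˢ {y : List A | y.length = n - l ∧ y ∉ S}) with hD
  have hDfin : ∀ l, (D l).Finite := by
    intro l
    refine sub_layer_finite (n := l + (n - l)) ?_
    rintro w ⟨⟨x, y⟩, hmem, rfl⟩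
    have h1 : x.length = l := hmem.1.2
    have h2 : y.length = n - l := hmem.2.1
    simp [h1, h2]
  have hSfin : ∀ m, ({w ∈ S | w.length = m} : Set (List A)).Finite :=
    fun m => sub_layer_finite (fun w hw => hw.2)
  have hMfin : ∀ m, ({x ∈ Mset S | x.length = m} : Set (List A)).Finite :=
    fun m => sub_layer_finite (fun w hw => hw.2)
  have hsub : (hSfin n).toFinset ⊆ (hMfin n).toFinset ∪
      (Icc 1 (n - 1)).biUnion (fun l => (hDfin l).toFinset) := by
    intro w hw
    rw [Set.Finite.mem_toFinset] at hw
    rcases cover hS hPF hw.1 hw.2 with h | ⟨l, hl, h⟩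
    · exact Finset.mem_union_left _ ((hMfin n).mem_toFinset.mpr h)
    · exact Finset.mem_union_right _ (Finset.mem_biUnion.mpr
        ⟨l, hl, (hDfin l).mem_toFinset.mpr h⟩)
  have hDcard : ∀ l, (D l).ncard = ({x ∈ Mset S | x.length = l}).ncard *
      (Fintype.card A ^ (n - l) - ({w ∈ S | w.length = n - l}).ncard) := by
    intro l
    rw [hD, append_ncard (fun x hx => hx.2) (fun y hy => hy.1)]
    congr 1
    have hset : {y : List A | y.length = n - l ∧ y ∉ S} =
        {y : List A | y.length = n - l} \ {w ∈ S | w.length = n - l} := by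
      ext y; simp only [Set.mem_setOf_eq, Set.mem_diff]; tauto
    rw [hset, Set.ncard_diff (show {w : List A | w ∈ S ∧ w.length = n - l} ⊆
      {y : List A | y.length = n - l} from fun w hw => hw.2) (hSfin (n - l)),
      layer_ncard]
  calc ({w ∈ S | w.length = n}).ncard = (hSfin n).toFinset.card :=
        Set.ncard_eq_toFinset_card _ (hSfin n)
    _ ≤ ((hMfin n).toFinset ∪ (Icc 1 (n - 1)).biUnion (fun l => (hDfin l).toFinset)).card :=
        Finset.card_le_card hsub
    _ ≤ (hMfin n).toFinset.card + ((Icc 1 (n - 1)).biUnion (fun l => (hDfin l).toFinset)).card :=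
        Finset.card_union_le _ _
    _ ≤ (hMfin n).toFinset.card + ∑ l ∈ Icc 1 (n - 1), (hDfin l).toFinset.card := by
        gcongr; exact Finset.card_biUnion_le
    _ = _ := by
        rw [← Set.ncard_eq_toFinset_card _ (hMfin n)]
        congr 1
        refine Finset.sum_congr rfl fun l hl => ?_
        rw [← Set.ncard_eq_toFinset_card _ (hDfin l), hDcard l]

noncomputable def Fd (A : Type*) [Fintype A] (S : Set (List A)) (l : ℕ) : ℝ :=
  ({x ∈ Mset S | x.length = l} : Set (List A)).ncard / (Fintype.card A : ℝ) ^ l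


variable [Nonempty A] (S : Set (List A))

lemma qpos : (0 : ℝ) < (Fintype.card A : ℝ) := by
  exact_mod_cast Fintype.card_pos

lemma d_nonneg (n : ℕ) : 0 ≤ layerDensity A S n :=
  div_nonneg (Nat.cast_nonneg _) (le_of_lt (pow_pos (qpos (A := A)) n))

lemma Fd_nonneg (l : ℕ) : 0 ≤ Fd A S l :=
  div_nonneg (Nat.cast_nonneg _) (le_of_lt (pow_pos (qpos (A := A)) l))

lemma d_le_one (n : ℕ) : layerDensity A S n ≤ 1 := by
  rw [layerDensity, div_le_one (pow_pos (qpos (A := A)) n)]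
  exact_mod_cast sn_le S n

lemma d_zero (hS : [] ∉ S) : layerDensity A S 0 = 0 := by
  have : ({w ∈ S | w.length = 0} : Set (List A)) = ∅ := by
    ext w
    simp only [Set.mem_setOf_eq, Set.mem_empty_iff_false, iff_false, not_and]
    intro hw hl
    exact absurd ((List.length_eq_zero_iff).mp hl ▸ hw) hS
  rw [layerDensity, this]
  simp

lemma sum_Fd_le_one (n : ℕ) : ∑ l ∈ Icc 1 n, Fd A S l ≤ 1 := by
  have h := key_b S n
  have hq : (0:ℝ) < (Fintype.card A : ℝ) ^ n := pow_pos (qpos (A := A)) n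
  have hcast : (∑ l ∈ Icc 1 n, (({x ∈ Mset S | x.length = l} : Set (List A)).ncard : ℝ) *
      (Fintype.card A : ℝ) ^ (n - l)) ≤ (Fintype.card A : ℝ) ^ n := by
    exact_mod_cast h
  have heq : ∑ l ∈ Icc 1 n, Fd A S l =
      (∑ l ∈ Icc 1 n, (({x ∈ Mset S | x.length = l} : Set (List A)).ncard : ℝ) *
        (Fintype.card A : ℝ) ^ (n - l)) / (Fintype.card A : ℝ) ^ n := by
    rw [Finset.sum_div]
    refine Finset.sum_congr rfl fun l hl => ?_
    rw [mem_Icc] at hl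
    rw [Fd]
    rw [div_eq_div_iff (ne_of_gt (pow_pos (qpos (A := A)) l)) (ne_of_gt hq)]
    rw [mul_assoc, ← pow_add]
    congr 2
    omega
  rw [heq, div_le_one hq]
  exact hcast

lemma d_rec (hS : [] ∉ S) (hPF : ProductFree S) (n : ℕ) :
    layerDensity A S n ≤ ∑ l ∈ Icc 1 n, Fd A S l -
      ∑ l ∈ Icc 1 (n - 1), Fd A S l * layerDensity A S (n - l) := by
  rcases Nat.eq_zero_or_pos n with rfl | hn
  · simp [d_zero S hS]
  have hq : ∀ m : ℕ, (0:ℝ) < (Fintype.card A : ℝ) ^ m := fun m => pow_pos (qpos (A := A)) m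
  have h := key_c hS hPF n
  -- cast to ℝ
  have hcast : (({w ∈ S | w.length = n} : Set (List A)).ncard : ℝ) ≤
      (({x ∈ Mset S | x.length = n} : Set (List A)).ncard : ℝ) +
      ∑ l ∈ Icc 1 (n - 1), (({x ∈ Mset S | x.length = l} : Set (List A)).ncard : ℝ) *
        ((Fintype.card A : ℝ) ^ (n - l) - (({w ∈ S | w.length = n - l} : Set (List A)).ncard : ℝ)) := by
    have := Nat.cast_le (α := ℝ) |>.mpr h
    push_cast [Nat.cast_sub (sn_le S _)] at this ⊢
    exact this
  -- divide by q^n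
  have hdiv : layerDensity A S n ≤ Fd A S n +
      ∑ l ∈ Icc 1 (n - 1), Fd A S l * (1 - layerDensity A S (n - l)) := by
    rw [layerDensity, div_le_iff₀ (hq n)]
    have hterm : ∀ l ∈ Icc 1 (n - 1), Fd A S l * (1 - layerDensity A S (n - l)) *
        (Fintype.card A : ℝ) ^ n =
        (({x ∈ Mset S | x.length = l} : Set (List A)).ncard : ℝ) *
        ((Fintype.card A : ℝ) ^ (n - l) - (({w ∈ S | w.length = n - l} : Set (List A)).ncard : ℝ)) := by
      intro l hl
      rw [mem_Icc] at hl
      have hpow : (Fintype.card A : ℝ) ^ n = (Fintype.card A : ℝ) ^ l * (Fintype.card A : ℝ) ^ (n - l) := by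
        rw [← pow_add]; congr 1; omega
      rw [Fd, layerDensity, hpow]
      field_simp
    calc (({w ∈ S | w.length = n} : Set (List A)).ncard : ℝ) ≤ _ := hcast
      _ = (Fd A S n + ∑ l ∈ Icc 1 (n - 1), Fd A S l * (1 - layerDensity A S (n - l))) *
          (Fintype.card A : ℝ) ^ n := by
        rw [add_mul, Finset.sum_mul, Fd, div_mul_cancel₀ _ (ne_of_gt (hq n))]
        congr 1
        exact (Finset.sum_congr rfl hterm).symm
  refine hdiv.trans ?_
  have hsplit : ∑ l ∈ Icc 1 n, Fd A S l = ∑ l ∈ Icc 1 (n - 1), Fd A S l + Fd A S n := by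
    have hn' : n - 1 + 1 = n := by omega
    rw [← hn', Finset.sum_Icc_succ_top (by omega)]
    rw [hn']
  rw [hsplit]
  have : ∑ l ∈ Icc 1 (n - 1), Fd A S l * (1 - layerDensity A S (n - l)) =
      ∑ l ∈ Icc 1 (n - 1), Fd A S l - ∑ l ∈ Icc 1 (n - 1), Fd A S l * layerDensity A S (n - l) := by
    rw [← Finset.sum_sub_distrib]
    refine Finset.sum_congr rfl fun l hl => by ring
  rw [this]; linarith

lemma window_bound (hS : [] ∉ S) (hPF : ProductFree S) {ε : ℝ} (hε : 0 < ε) :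
    ∃ N : ℕ, 1 ≤ N ∧ ∀ a b : ℕ, N ≤ b - a →
      ∑ i ∈ Icc a b, layerDensity A S i ≤ (1 / 2 + ε) * (((b - a : ℕ) : ℝ) + 1) := by
  classical
  set d : ℕ → ℝ := layerDensity A S with hd
  set F : ℕ → ℝ := Fd A S with hF
  have hFnn : ∀ l, 0 ≤ F l := Fd_nonneg S
  have hdnn : ∀ n, 0 ≤ d n := d_nonneg S
  have hd1 : ∀ n, d n ≤ 1 := d_le_one S
  have hd0 : d 0 = 0 := d_zero S hS
  set Sigf : ℕ → ℝ := fun n => ∑ l ∈ Icc 1 n, F l with hSigf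
  have hbdd : ∀ n, Sigf n ≤ 1 := sum_Fd_le_one S
  have hBdd : BddAbove (Set.range Sigf) := ⟨1, by rintro x ⟨n, rfl⟩; exact hbdd n⟩
  set σ : ℝ := ⨆ n, Sigf n with hσ
  have hub : ∀ n, Sigf n ≤ σ := fun n => le_ciSup hBdd n
  have hσ1 : σ ≤ 1 := ciSup_le hbdd
  have hσ0 : 0 ≤ σ := le_trans (by simp [hSigf]) (hub 0)
  obtain ⟨t0, ht0⟩ : ∃ t0, σ - ε / 2 < Sigf t0 :=
    exists_lt_of_lt_ciSup (by linarith : σ - ε / 2 < σ)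
  set s : ℝ := Sigf t0 with hs
  have hs0 : 0 ≤ s := Finset.sum_nonneg fun l _ => hFnn l
  have hs1 : s ≤ 1 := hbdd t0
  have hσs : σ ≤ s + ε / 2 := by linarith
  refine ⟨max (t0 + 1) ⌈(2 * (t0 : ℝ)) / ε⌉₊, le_max_of_le_left (by omega), ?_⟩
  intro a b hab
  set k : ℕ := b - a with hk
  have ht0k : t0 < k := by
    have := le_max_left (t0 + 1) ⌈(2 * (t0 : ℝ)) / ε⌉₊
    omega
  have hab' : a + k = b ∧ t0 < b - a := by omega
  have halt : a < b := by omega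
  have ht0ε : (t0 : ℝ) ≤ ε / 2 * ((k : ℕ) + 1 : ℝ) := by
    have h1 : ((⌈(2 * (t0 : ℝ)) / ε⌉₊ : ℕ) : ℝ) ≤ (k : ℝ) := by
      exact_mod_cast Nat.cast_le.mpr (le_trans (le_max_right _ _) hab)
    have h2 : (2 * (t0 : ℝ)) / ε ≤ (k : ℝ) := le_trans (Nat.le_ceil _) h1
    rw [div_le_iff₀ hε] at h2
    have : (k : ℝ) ≤ (k : ℝ) + 1 := by linarith
    nlinarith
  -- step 2 : pointwise recursion truncated at t0
  have step2 : ∀ n, d n ≤ σ - ∑ l ∈ Icc 1 t0, F l * d (n - l) := by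
    intro n
    have h1 := d_rec S hS hPF n
    have h2 : ∑ l ∈ Icc 1 t0, F l * d (n - l) ≤
        ∑ l ∈ Icc 1 (n - 1), F l * d (n - l) := by
      have he : ∑ l ∈ Icc 1 (min (n - 1) t0), F l * d (n - l) =
          ∑ l ∈ Icc 1 t0, F l * d (n - l) := by
        refine Finset.sum_subset ?_ ?_
        · exact Finset.Icc_subset_Icc_right (min_le_right _ _)
        · intro l hl hnl
          rw [mem_Icc] at hl
          simp only [mem_Icc, not_and, not_le] at hnl
          have : n - l = 0 := by
            rcases le_or_gt l (n-1) with h | h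
            · have := hnl hl.1
              omega
            · omega
          rw [this, hd0, mul_zero]
      rw [← he]
      refine Finset.sum_le_sum_of_subset_of_nonneg
        (Finset.Icc_subset_Icc_right (min_le_left _ _)) ?_
      intro l _ _
      exact mul_nonneg (hFnn l) (hdnn _)
    calc d n ≤ Sigf n - ∑ l ∈ Icc 1 (n - 1), F l * d (n - l) := h1
      _ ≤ σ - ∑ l ∈ Icc 1 t0, F l * d (n - l) := by
          have := hub n
          linarith
  set A' : ℝ := ∑ i ∈ Icc a b, d i with hA'
  have hcard : ((Icc a b).card : ℝ) = (k : ℝ) + 1 := by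
    rw [Nat.card_Icc]
    have h : b + 1 - a = k + 1 := by omega
    rw [h]
    push_cast
    ring
  -- step 3 : sum over the window
  have step3 : A' ≤ σ * ((k : ℝ) + 1) - ∑ l ∈ Icc 1 t0, F l * (∑ n ∈ Icc a b, d (n - l)) := by
    have h1 : A' ≤ ∑ n ∈ Icc a b, (σ - ∑ l ∈ Icc 1 t0, F l * d (n - l)) :=
      Finset.sum_le_sum fun n _ => step2 n
    have h2 : ∑ n ∈ Icc a b, (σ - ∑ l ∈ Icc 1 t0, F l * d (n - l)) =
        σ * ((k : ℝ) + 1) - ∑ l ∈ Icc 1 t0, F l * (∑ n ∈ Icc a b, d (n - l)) := by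
      rw [Finset.sum_sub_distrib, Finset.sum_const, Finset.sum_comm]
      congr 1
      · rw [nsmul_eq_mul, hcard, mul_comm]
      · exact Finset.sum_congr rfl fun l _ => (Finset.mul_sum _ _ _).symm
    linarith
  -- step 4 : lower bound for the shifted window sums
  have step4 : ∀ l ∈ Icc 1 t0, A' - t0 ≤ ∑ n ∈ Icc a b, d (n - l) := by
    intro l hl
    rw [mem_Icc] at hl
    have hlb : l ≤ b := by omega
    have halb : a ≤ b - l := by omega
    have h2 : ∑ n ∈ Icc (a + l) b, d (n - l) = ∑ i ∈ Icc a (b - l), d i := by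
      have : Icc (a + l) b = (Icc a (b - l)).map (addRightEmbedding l) := by
        rw [Finset.map_add_right_Icc]
        congr 1
        omega
      rw [this, Finset.sum_map]
      refine Finset.sum_congr rfl fun i _ => ?_
      simp [addRightEmbedding]
    have h1 : ∑ n ∈ Icc (a + l) b, d (n - l) ≤ ∑ n ∈ Icc a b, d (n - l) := by
      refine Finset.sum_le_sum_of_subset_of_nonneg ?_ (fun n _ _ => hdnn _)
      exact Finset.Icc_subset_Icc_left (by omega)
    have h3 : A' = ∑ i ∈ Icc a (b - l), d i + ∑ i ∈ Ioc (b - l) b, d i := by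
      have hsp : Icc a b = Icc a (b - l) ∪ Ioc (b - l) b := by
        ext i
        simp only [mem_Icc, mem_Ioc, mem_union]
        omega
      rw [hA', hsp, Finset.sum_union]
      rw [Finset.disjoint_left]
      intro i hi hi'
      rw [mem_Icc] at hi
      rw [mem_Ioc] at hi'
      omega
    have h4 : ∑ i ∈ Ioc (b - l) b, d i ≤ (t0 : ℝ) := by
      calc ∑ i ∈ Ioc (b - l) b, d i ≤ ∑ i ∈ Ioc (b - l) b, (1 : ℝ) :=
            Finset.sum_le_sum fun i _ => hd1 i
        _ = ((Ioc (b - l) b).card : ℝ) := by rw [Finset.sum_const, nsmul_eq_mul, mul_one]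
        _ = (l : ℝ) := by rw [Nat.card_Ioc]; congr 1; omega
        _ ≤ (t0 : ℝ) := by exact_mod_cast hl.2
    linarith [h2 ▸ h1]
  -- step 5 : combine
  have step5 : s * (A' - t0) ≤ ∑ l ∈ Icc 1 t0, F l * (∑ n ∈ Icc a b, d (n - l)) := by
    rw [hs, hSigf, Finset.sum_mul]
    exact Finset.sum_le_sum fun l hl =>
      mul_le_mul_of_nonneg_left (step4 l hl) (hFnn l)
  have hA0 : 0 ≤ A' := Finset.sum_nonneg fun i _ => hdnn i
  have hK1 : (1 : ℝ) ≤ (k : ℝ) + 1 := by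
    have := Nat.cast_nonneg (α := ℝ) k
    linarith
  have hfinal : A' ≤ σ * ((k : ℝ) + 1) - s * (A' - t0) := by linarith
  show A' ≤ (1 / 2 + ε) * ((k : ℕ) + 1 : ℝ)
  nlinarith [mul_le_mul_of_nonneg_right hσs (by linarith : (0:ℝ) ≤ (k:ℝ)+1), mul_nonneg hs0 hA0,
    mul_le_mul_of_nonneg_left ht0ε hs0, mul_nonneg (mul_nonneg hs0 hε.le) (by linarith : (0:ℝ) ≤ (k:ℝ)+1)]

end PFaux2
end PFAuxSection

/-- Product-free subsets of the free semigroup over a nonempty finite alphabet have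
upper Banach density at most `1/2`. -/
theorem productFree_upperBanachDensity_le_half
    {A : Type*} [Fintype A] [Nonempty A] {S : Set (List A)}
    (hS : [] ∉ S) (hPF : ProductFree S) :
    upperBanachDensity A S ≤ 1 / 2 := by
  classical
  have key : ∀ ε : ℝ, 0 < ε → upperBanachDensity A S ≤ 1 / 2 + ε := by
    intro ε hε
    obtain ⟨N, hN1, hN⟩ := PFaux2.window_bound S hS hPF hε
    rw [upperBanachDensity]
    haveI hne : (Filter.comap (fun p : ℕ × ℕ => p.2 - p.1) Filter.atTop).NeBot := by
      refine Filter.comap_neBot fun t ht => ?_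
      obtain ⟨M, hM⟩ := Filter.mem_atTop_sets.mp ht
      exact ⟨(0, M), hM M (by simp)⟩
    refine Filter.limsup_le_of_le (Filter.isCoboundedUnder_le_of_le _ (x := 0)
      (fun p => div_nonneg (Finset.sum_nonneg fun i _ => PFaux2.d_nonneg S i)
        (by positivity))) ?_
    have hmem : {p : ℕ × ℕ | N ≤ p.2 - p.1} ∈
        Filter.comap (fun p : ℕ × ℕ => p.2 - p.1) Filter.atTop :=
      Filter.preimage_mem_comap (Filter.mem_atTop N)
    refine Filter.eventually_of_mem hmem fun p hp => ?_
    have hb := hN p.1 p.2 hp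
    have hpos : (0:ℝ) < ((p.2 - p.1 : ℕ) : ℝ) + 1 := by positivity
    rw [div_le_iff₀ hpos]
    exact hb
  by_contra hcon
  push_neg at hcon
  have := key ((upperBanachDensity A S - 1 / 2) / 2) (by linarith)
  linarith
end

section
/- Let A be a nonempty finite alphabet. If S is a product-free subset of the free semigroup F_A, then the upper asymptotic density of S is at most 1/2. -/
open Filter

section Aux
open scoped Classical

variable {A : Type*} [Fintype A]

/-- The finset of all words of length `n`. -/
noncomputable def pfLayer (A : Type*) [Fintype A] (n : ℕ) : Finset (List A) :=
  (Finset.univ : Finset (Fin n → A)).image (fun f => List.ofFn f)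

lemma mem_pfLayer {n : ℕ} {w : List A} : w ∈ pfLayer A n ↔ w.length = n := by
  classical
  unfold pfLayer
  constructor
  · intro h
    rcases Finset.mem_image.1 h with ⟨v, -, rfl⟩
    exact List.length_ofFn
  · intro h
    subst h
    exact Finset.mem_image.2 ⟨fun i => w.get i, Finset.mem_univ _, List.ofFn_get w⟩

lemma card_pfLayer (n : ℕ) : (pfLayer A n).card = Fintype.card A ^ n := by
  classical
  unfold pfLayer
  rw [Finset.card_image_of_injective _ (List.ofFn_injective), Finset.card_univ]
  simp

/-- The finset of words of `S` of length `n`. -/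
noncomputable def pfS (S : Set (List A)) (n : ℕ) : Finset (List A) :=
  (pfLayer A n).filter (· ∈ S)

/-- The finset of words of `S` of length `n` having no proper prefix in `S`. -/
noncomputable def pfB (S : Set (List A)) (n : ℕ) : Finset (List A) :=
  (pfS S n).filter (fun w => ∀ m, m < n → w.take m ∉ S)

lemma mem_pfS {S : Set (List A)} {n : ℕ} {w : List A} :
    w ∈ pfS S n ↔ w ∈ S ∧ w.length = n := by
  classical
  unfold pfS
  simp [mem_pfLayer, and_comm]

lemma mem_pfB {S : Set (List A)} {n : ℕ} {w : List A} :
    w ∈ pfB S n ↔ (w ∈ S ∧ w.length = n) ∧ ∀ m, m < n → w.take m ∉ S := by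
  classical
  unfold pfB
  simp [mem_pfS]

lemma pfS_subset_layer {S : Set (List A)} (n : ℕ) : pfS S n ⊆ pfLayer A n := by
  intro w hw
  exact mem_pfLayer.2 (mem_pfS.1 hw).2

lemma pfS_card_le {S : Set (List A)} (n : ℕ) :
    (pfS S n).card ≤ Fintype.card A ^ n := by
  rw [← card_pfLayer (A := A) n]
  exact Finset.card_le_card (pfS_subset_layer n)

/-- Main decomposition: every `S`-word decomposes at its shortest `S`-prefix. -/
lemma pfS_subset_decomp {S : Set (List A)} (hS : ([] : List A) ∉ S)
    (hPF : ProductFree S) (n : ℕ) :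
    pfS S n ⊆ pfB S n ∪ (Finset.Ico 1 n).biUnion
      (fun m => ((pfB S m) ×ˢ ((pfLayer A (n - m)) \ (pfS S (n - m)))).image
        (fun p => p.1 ++ p.2)) := by
  classical
  intro w hw
  rw [mem_pfS] at hw
  obtain ⟨hwS, hwlen⟩ := hw
  have htake : w.take n ∈ S := by
    rw [← hwlen, List.take_length]; exact hwS
  have hex : ∃ m, w.take m ∈ S := ⟨n, htake⟩
  set m₀ := Nat.find hex with hm₀def
  have hm₀S : w.take m₀ ∈ S := Nat.find_spec hex
  have hmin : ∀ m, m < m₀ → w.take m ∉ S := fun m hm => Nat.find_min hex hm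
  have hm₀le : m₀ ≤ n := Nat.find_le htake
  have hm₀pos : 1 ≤ m₀ := by
    rcases Nat.eq_zero_or_pos m₀ with h0 | h1
    · exfalso
      have := hm₀S
      rw [h0, List.take_zero] at this
      exact hS this
    · exact h1
  rcases eq_or_lt_of_le hm₀le with heq | hlt
  · refine Finset.mem_union_left _ ?_
    rw [mem_pfB]
    exact ⟨⟨hwS, hwlen⟩, fun m hm => hmin m (by omega)⟩
  · refine Finset.mem_union_right _ ?_
    refine Finset.mem_biUnion.2 ⟨m₀, Finset.mem_Ico.2 ⟨hm₀pos, hlt⟩, ?_⟩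
    refine Finset.mem_image.2 ⟨(w.take m₀, w.drop m₀), ?_, List.take_append_drop _ _⟩
    rw [Finset.mem_product]
    constructor
    · rw [mem_pfB]
      refine ⟨⟨hm₀S, by rw [List.length_take]; omega⟩, ?_⟩
      intro m hm hmem
      have hh : (w.take m₀).take m = w.take m := by
        rw [List.take_take, inf_eq_left.mpr hm.le]
      rw [hh] at hmem
      exact hmin m hm hmem
    · rw [Finset.mem_sdiff, mem_pfLayer, List.length_drop, hwlen]
      refine ⟨rfl, ?_⟩
      intro hmem
      have hdS : w.drop m₀ ∈ S := (mem_pfS.1 hmem).1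
      have := hPF _ hm₀S _ hdS
      rw [List.take_append_drop] at this
      exact this hwS

lemma count_le {S : Set (List A)} (hS : ([] : List A) ∉ S) (hPF : ProductFree S) (n : ℕ) :
    (pfS S n).card ≤ (pfB S n).card +
      ∑ m ∈ Finset.Ico 1 n,
        (pfB S m).card * ((pfLayer A (n - m) \ pfS S (n - m)).card) := by
  classical
  refine (Finset.card_le_card (pfS_subset_decomp hS hPF n)).trans ?_
  refine (Finset.card_union_le _ _).trans ?_
  refine Nat.add_le_add_left ?_ _
  refine (Finset.card_biUnion_le).trans ?_
  refine Finset.sum_le_sum (fun m _ => ?_)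
  refine (Finset.card_image_le).trans ?_
  rw [Finset.card_product]

lemma card_sdiff_layer {S : Set (List A)} (j : ℕ) :
    ((pfLayer A j \ pfS S j).card : ℝ)
      = (Fintype.card A : ℝ) ^ j - ((pfS S j).card : ℝ) := by
  classical
  rw [Finset.card_sdiff_of_subset (pfS_subset_layer j), Nat.cast_sub (Finset.card_le_card (pfS_subset_layer j))]
  rw [card_pfLayer]
  push_cast
  ring

/-- Kraft-type inequality for the prefix-free family `B`. -/
lemma kraft {S : Set (List A)} (M : ℕ) :
    ∑ m ∈ Finset.Icc 1 M, (pfB S m).card * Fintype.card A ^ (M - m)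
      ≤ Fintype.card A ^ M := by
  classical
  -- one-sided comparability helper
  have key : ∀ p₁ p₂ v₁ v₂ : List A, ∀ m₁ m₂ : ℕ,
      p₁ ∈ pfB S m₁ → p₂ ∈ pfB S m₂ → p₁ ++ v₁ = p₂ ++ v₂ → p₁.length ≤ p₂.length → p₁ = p₂ := by
    intro p₁ p₂ v₁ v₂ m₁ m₂ h₁ h₂ heq hle
    obtain ⟨⟨h₁S, h₁len⟩, _⟩ := mem_pfB.1 h₁
    obtain ⟨⟨h₂S, h₂len⟩, h₂min⟩ := mem_pfB.1 h₂
    have htk : p₂.take p₁.length = p₁ := by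
      have e1 : (p₁ ++ v₁).take p₁.length = p₁ := by
        rw [List.take_append_of_le_length le_rfl, List.take_length]
      have e2 : (p₂ ++ v₂).take p₁.length = p₂.take p₁.length :=
        List.take_append_of_le_length hle
      rw [← e2, ← heq, e1]
    rcases lt_or_eq_of_le hle with hlt | heqlen
    · exfalso
      have := h₂min p₁.length (by omega)
      rw [htk] at this
      exact this h₁S
    · rw [← htk, heqlen, List.take_length]
  set Ball : Finset (List A) := (Finset.Icc 1 M).biUnion (fun m => pfB S m) with hBall
  have hBall_mem : ∀ p ∈ Ball, p ∈ S ∧ 1 ≤ p.length ∧ p.length ≤ M ∧ p ∈ pfB S p.length := by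
    intro p hp
    rcases Finset.mem_biUnion.1 hp with ⟨m, hm, hpm⟩
    obtain ⟨⟨hpS, hplen⟩, hpmin⟩ := mem_pfB.1 hpm
    rcases Finset.mem_Icc.1 hm with ⟨hm1, hm2⟩
    subst hplen
    exact ⟨hpS, hm1, hm2, hpm⟩
  -- extensions
  set E : List A → Finset (List A) := fun p => (pfLayer A (M - p.length)).image (fun v => p ++ v)
    with hE
  have hcardE : ∀ p, (E p).card = Fintype.card A ^ (M - p.length) := by
    intro p
    rw [hE]
    rw [Finset.card_image_of_injective _ (List.append_right_injective p), card_pfLayer]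
  have hdisj : ∀ p₁ ∈ Ball, ∀ p₂ ∈ Ball, p₁ ≠ p₂ → Disjoint (E p₁) (E p₂) := by
    intro p₁ h₁ p₂ h₂ hne
    rw [Finset.disjoint_left]
    intro w hw₁ hw₂
    rcases Finset.mem_image.1 hw₁ with ⟨v₁, -, hv₁⟩
    rcases Finset.mem_image.1 hw₂ with ⟨v₂, -, hv₂⟩
    have heq : p₁ ++ v₁ = p₂ ++ v₂ := by rw [hv₁, hv₂]
    obtain ⟨-, -, -, hp₁⟩ := hBall_mem p₁ h₁
    obtain ⟨-, -, -, hp₂⟩ := hBall_mem p₂ h₂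
    rcases le_total p₁.length p₂.length with hle | hle
    · exact hne (key p₁ p₂ v₁ v₂ _ _ hp₁ hp₂ heq hle)
    · exact hne (key p₂ p₁ v₂ v₁ _ _ hp₂ hp₁ heq.symm hle).symm
  have hsub : Ball.biUnion E ⊆ pfLayer A M := by
    intro w hw
    rcases Finset.mem_biUnion.1 hw with ⟨p, hp, hwp⟩
    rcases Finset.mem_image.1 hwp with ⟨v, hv, rfl⟩
    obtain ⟨-, -, hpM, -⟩ := hBall_mem p hp
    rw [mem_pfLayer, List.length_append, mem_pfLayer.1 hv]
    omega
  have hcard : ∑ p ∈ Ball, Fintype.card A ^ (M - p.length) ≤ Fintype.card A ^ M := by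
    calc ∑ p ∈ Ball, Fintype.card A ^ (M - p.length)
        = ∑ p ∈ Ball, (E p).card := by
          exact Finset.sum_congr rfl (fun p _ => (hcardE p).symm)
      _ = (Ball.biUnion E).card := (Finset.card_biUnion hdisj).symm
      _ ≤ (pfLayer A M).card := Finset.card_le_card hsub
      _ = Fintype.card A ^ M := card_pfLayer M
  -- rewrite the sum over Ball as a double sum
  have hdisjB : ∀ m₁ ∈ Finset.Icc 1 M, ∀ m₂ ∈ Finset.Icc 1 M, m₁ ≠ m₂ →
      Disjoint (pfB S m₁) (pfB S m₂) := by
    intro m₁ _ m₂ _ hne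
    rw [Finset.disjoint_left]
    intro p hp₁ hp₂
    have e₁ := (mem_pfB.1 hp₁).1.2
    have e₂ := (mem_pfB.1 hp₂).1.2
    omega
  rw [hBall] at hcard
  rw [Finset.sum_biUnion] at hcard
  · refine le_trans (le_of_eq ?_) hcard
    refine Finset.sum_congr rfl (fun m _ => ?_)
    rw [Finset.sum_congr rfl (fun p hp => by rw [(mem_pfB.1 hp).1.2] : ∀ p ∈ pfB S m,
      Fintype.card A ^ (M - p.length) = Fintype.card A ^ (M - m))]
    rw [Finset.sum_const, smul_eq_mul]
  · intro m₁ h₁ m₂ h₂ hne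
    exact hdisjB m₁ h₁ m₂ h₂ hne

end Aux

section Real

open scoped Classical
open Finset

variable {A : Type*} [Fintype A] [Nonempty A]

lemma layerDensity_eq {S : Set (List A)} (n : ℕ) :
    layerDensity A S n = ((pfS S n).card : ℝ) / (Fintype.card A : ℝ) ^ n := by
  have hset : {w ∈ S | w.length = n} = (↑(pfS S n) : Set (List A)) := by
    ext w
    simp only [Set.mem_setOf_eq, Finset.mem_coe, mem_pfS]
  rw [layerDensity, hset, Set.ncard_coe_finset]

lemma sum_density_le {S : Set (List A)} (hS : ([] : List A) ∉ S) (hPF : ProductFree S)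
    (M : ℕ) :
    ∑ i ∈ Finset.Icc 1 M, layerDensity A S i ≤ (M + 1) / 2 := by
  set k : ℝ := (Fintype.card A : ℝ) with hkdef
  have hk : (0 : ℝ) < k := by
    rw [hkdef]
    exact_mod_cast Fintype.card_pos
  set a : ℕ → ℝ := fun n => ((pfS S n).card : ℝ) with ha
  set b : ℕ → ℝ := fun n => ((pfB S n).card : ℝ) with hb
  set d : ℕ → ℝ := fun n => a n / k ^ n with hd
  have hd0 : ∀ j, 0 ≤ d j := by
    intro j
    apply div_nonneg (by positivity) (by positivity)
  have hd1 : ∀ j, d j ≤ 1 := by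
    intro j
    rw [hd]
    apply div_le_one_of_le₀ _ (by positivity)
    rw [ha, hkdef]
    calc ((pfS S j).card : ℝ) ≤ ((Fintype.card A ^ j : ℕ) : ℝ) := by
          exact_mod_cast pfS_card_le j
      _ = (Fintype.card A : ℝ) ^ j := by push_cast; ring
  have hb0 : ∀ m, 0 ≤ b m / k ^ m := fun m => div_nonneg (by positivity) (by positivity)
  -- the per-layer inequality, in ℝ
  have hcount : ∀ n : ℕ, a n ≤ b n + ∑ m ∈ Finset.Ico 1 n, b m * (k ^ (n - m) - a (n - m)) := by
    intro n
    have h := count_le hS hPF n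
    have h' : a n ≤ b n + ∑ m ∈ Finset.Ico 1 n,
        b m * (((pfLayer A (n - m) \ pfS S (n - m)).card : ℝ)) := by
      simp only [ha, hb]
      exact_mod_cast h
    refine h'.trans (le_of_eq ?_)
    congr 1
    refine Finset.sum_congr rfl (fun m _ => ?_)
    rw [card_sdiff_layer]
  have hdiv : ∀ n : ℕ, d n ≤ b n / k ^ n
      + ∑ m ∈ Finset.Ico 1 n, (b m / k ^ m) * (1 - d (n - m)) := by
    intro n
    have hkn : (0 : ℝ) < k ^ n := by positivity
    calc d n = a n / k ^ n := rfl
      _ ≤ (b n + ∑ m ∈ Finset.Ico 1 n, b m * (k ^ (n - m) - a (n - m))) / k ^ n := by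
          exact div_le_div_of_nonneg_right (hcount n) hkn.le |>.trans_eq rfl
      _ = b n / k ^ n + ∑ m ∈ Finset.Ico 1 n, (b m / k ^ m) * (1 - d (n - m)) := by
          rw [add_div, Finset.sum_div]
          congr 1
          refine Finset.sum_congr rfl (fun m hm => ?_)
          have hmn : m ≤ n := le_of_lt (Finset.mem_Ico.1 hm).2
          have hpow : k ^ m * k ^ (n - m) = k ^ n := by
            rw [← pow_add]
            congr 1
            omega
          have h1 : (1 : ℝ) - d (n - m) = (k ^ (n - m) - a (n - m)) / k ^ (n - m) := by
            rw [hd]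
            rw [sub_div, div_self (by positivity : (k:ℝ) ^ (n-m) ≠ 0)]
          rw [h1, div_mul_div_comm, hpow]
  -- Kraft in ℝ
  have hK : ∑ m ∈ Finset.Icc 1 M, b m / k ^ m ≤ 1 := by
    have h := kraft (S := S) (A := A) M
    have hkM : (0 : ℝ) < k ^ M := by positivity
    have h' : ∑ m ∈ Finset.Icc 1 M, b m * k ^ (M - m) ≤ k ^ M := by
      simp only [hb, hkdef]
      exact_mod_cast h
    calc ∑ m ∈ Finset.Icc 1 M, b m / k ^ m
        = ∑ m ∈ Finset.Icc 1 M, (b m * k ^ (M - m)) / k ^ M := by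
          refine Finset.sum_congr rfl (fun m hm => ?_)
          have hmM : m ≤ M := (Finset.mem_Icc.1 hm).2
          have hpow : k ^ m * k ^ (M - m) = k ^ M := by
            rw [← pow_add]; congr 1; omega
          rw [← hpow]
          rw [mul_div_mul_right _ _ (by positivity : (k:ℝ) ^ (M - m) ≠ 0)]
      _ = (∑ m ∈ Finset.Icc 1 M, b m * k ^ (M - m)) / k ^ M := by
          rw [Finset.sum_div]
      _ ≤ k ^ M / k ^ M := by
          exact div_le_div_of_nonneg_right h' hkM.le |>.trans_eq rfl
      _ = 1 := div_self (ne_of_gt hkM)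
  -- main computation
  set s : ℝ := ∑ i ∈ Finset.Icc 1 M, d i with hs
  have hsM : s ≤ M := by
    rw [hs]
    calc ∑ i ∈ Finset.Icc 1 M, d i ≤ ∑ i ∈ Finset.Icc 1 M, (1 : ℝ) :=
          Finset.sum_le_sum (fun i _ => hd1 i)
      _ = M := by
          rw [Finset.sum_const, Nat.card_Icc]
          simp
  have hrest : ∀ m ∈ Finset.Icc 1 M,
      ∑ n ∈ Finset.Icc 1 M, (if m < n then (b m / k ^ m) * (1 - d (n - m)) else 0)
        ≤ (b m / k ^ m) * (M - s) := by
    intro m hm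
    have hmM : m ≤ M := (Finset.mem_Icc.1 hm).2
    rw [← Finset.sum_filter]
    have hfil : (Finset.Icc 1 M).filter (fun n => m < n) = Finset.Icc (m + 1) M := by
      ext n
      simp only [Finset.mem_filter, Finset.mem_Icc]
      omega
    rw [hfil]
    have hmap : Finset.Icc (m + 1) M
        = (Finset.Icc 1 (M - m)).map (addLeftEmbedding m) := by
      rw [Finset.map_add_left_Icc]
      congr 1
      omega
    rw [hmap, Finset.sum_map]
    have hcal : ∀ j ∈ Finset.Icc 1 (M - m),
        (b m / k ^ m) * (1 - d ((addLeftEmbedding m) j - m)) = (b m / k ^ m) * (1 - d j) := by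
      intro j _
      congr 2
      simp [addLeftEmbedding]
    rw [Finset.sum_congr rfl hcal, ← Finset.mul_sum]
    refine mul_le_mul_of_nonneg_left ?_ (hb0 m)
    have hsub : ∑ j ∈ Finset.Icc 1 (M - m), (1 - d j) ≤ ∑ j ∈ Finset.Icc 1 M, (1 - d j) := by
      refine Finset.sum_le_sum_of_subset_of_nonneg ?_ ?_
      · exact Finset.Icc_subset_Icc le_rfl (by omega)
      · intro j _ _
        linarith [hd1 j]
    refine hsub.trans (le_of_eq ?_)
    rw [Finset.sum_sub_distrib, Finset.sum_const, Nat.card_Icc, hs]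
    simp
  have hmain : s ≤ 1 + (M - s) := by
    have h1 : s ≤ ∑ n ∈ Finset.Icc 1 M, (b n / k ^ n
        + ∑ m ∈ Finset.Ico 1 n, (b m / k ^ m) * (1 - d (n - m))) := by
      rw [hs]
      exact Finset.sum_le_sum (fun n _ => hdiv n)
    rw [Finset.sum_add_distrib] at h1
    have h2 : ∀ n ∈ Finset.Icc 1 M,
        ∑ m ∈ Finset.Ico 1 n, (b m / k ^ m) * (1 - d (n - m))
          = ∑ m ∈ Finset.Icc 1 M, (if m < n then (b m / k ^ m) * (1 - d (n - m)) else 0) := by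
      intro n hn
      have hnM : n ≤ M := (Finset.mem_Icc.1 hn).2
      rw [← Finset.sum_filter]
      congr 1
      ext mm
      simp only [Finset.mem_filter, Finset.mem_Icc, Finset.mem_Ico]
      omega
    rw [Finset.sum_congr rfl h2, Finset.sum_comm] at h1
    have h3 : ∑ m ∈ Finset.Icc 1 M,
        ∑ n ∈ Finset.Icc 1 M, (if m < n then (b m / k ^ m) * (1 - d (n - m)) else 0)
          ≤ ∑ m ∈ Finset.Icc 1 M, (b m / k ^ m) * (M - s) :=
      Finset.sum_le_sum hrest
    have h4 : ∑ m ∈ Finset.Icc 1 M, (b m / k ^ m) * (M - s)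
        = (∑ m ∈ Finset.Icc 1 M, b m / k ^ m) * (M - s) := by
      rw [Finset.sum_mul]
    have h5 : (∑ m ∈ Finset.Icc 1 M, b m / k ^ m) * (M - s) ≤ 1 * (M - s) := by
      refine mul_le_mul_of_nonneg_right hK (by linarith)
    have h6 : ∑ n ∈ Finset.Icc 1 M, b n / k ^ n ≤ 1 := hK
    calc s ≤ (∑ n ∈ Finset.Icc 1 M, b n / k ^ n) + ∑ m ∈ Finset.Icc 1 M,
          ∑ n ∈ Finset.Icc 1 M, (if m < n then (b m / k ^ m) * (1 - d (n - m)) else 0) := h1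
      _ ≤ 1 + 1 * (M - s) := by
          refine add_le_add h6 ?_
          exact h3.trans (h4.le.trans h5)
      _ = 1 + (M - s) := by ring
  have hfinal : ∑ i ∈ Finset.Icc 1 M, layerDensity A S i = s := by
    rw [hs]
    refine Finset.sum_congr rfl (fun i _ => ?_)
    rw [layerDensity_eq]
  rw [hfinal]
  linarith

end Real


/-- Product-free subsets of the free semigroup over a nonempty finite alphabet have
upper asymptotic density at most `1/2`. -/
theorem productFree_upperAsympDensity_le_half
    {A : Type*} [Fintype A] [Nonempty A] {S : Set (List A)}
    (hS : [] ∉ S) (hPF : ProductFree S) :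
    upperAsympDensity A S ≤ 1 / 2 := by
  have key : ∀ M : ℕ, ∑ i ∈ Finset.Icc 1 M, layerDensity A S i ≤ (M + 1) / 2 :=
    fun M => sum_density_le hS hPF M
  have h0 : ∀ n : ℕ, (0:ℝ) ≤ (∑ i ∈ Finset.Icc 1 n, layerDensity A S i) / n := by
    intro n
    apply div_nonneg _ (Nat.cast_nonneg n)
    refine Finset.sum_nonneg (fun i _ => ?_)
    rw [layerDensity]
    positivity
  rw [upperAsympDensity]
  refine le_of_forall_pos_le_add (fun ε hε => ?_)
  refine Filter.limsup_le_of_le (Filter.isCoboundedUnder_le_of_le Filter.atTop h0) ?_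
  filter_upwards [Filter.eventually_ge_atTop (max 1 (⌈1/ε⌉₊ + 1))] with n hn
  have hn1 : 1 ≤ n := le_trans (le_max_left _ _) hn
  have hn2 : (1/ε : ℝ) ≤ n := by
    have hle : ⌈1/ε⌉₊ ≤ n := by
      have := le_trans (le_max_right 1 (⌈1/ε⌉₊ + 1)) hn
      omega
    have hle' : ((⌈1/ε⌉₊ : ℕ) : ℝ) ≤ (n : ℝ) := by exact_mod_cast hle
    exact (Nat.le_ceil _).trans hle'
  have hnpos : (0:ℝ) < n := by exact_mod_cast hn1
  have hεn : 1 ≤ ε * n := by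
    rw [div_le_iff₀ hε] at hn2
    linarith
  calc (∑ i ∈ Finset.Icc 1 n, layerDensity A S i) / n
      ≤ (((n:ℝ) + 1)/2) / n := div_le_div_of_nonneg_right (key n) hnpos.le
    _ ≤ 1/2 + ε := by
        rw [div_le_iff₀ hnpos]
        nlinarith [hεn, hnpos]
end

section
/- Let A be a nonempty finite alphabet and let S be a product-free subset of the free semigroup F_A. Then for any sequence of positive integers ℓ_1 < ℓ_2 < … < ℓ_k < n, we have d_S(ℓ_1)·d_S(n−ℓ_1) + d_S(ℓ_2; ℓ_1)·d_S(n−ℓ_2) + … + d_S(ℓ_k; ℓ_1, …, ℓ_{k−1})·d_S(n−ℓ_k) + d_S(n) ≤ d_S(ℓ_1) + d_S(ℓ_2; ℓ_1) + … + d_S(ℓ_k; ℓ_1, …, ℓ_{k−1}) + d_S(n; ℓ_1, …, ℓ_k) ≤ 1. -/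
open Filter

section KeyAux

variable {A : Type*} [Fintype A]

private lemma pfKey_layer_ncard (m : ℕ) :
    ({w : List A | w.length = m}).ncard = Fintype.card A ^ m := by
  rw [← Nat.card_coe_set_eq, ← card_vector (α := A) m]
  exact Nat.card_eq_fintype_card (α := List.Vector A m)

private lemma pfKey_ncard_sprod {α β : Type*} (s : Set α) (t : Set β) :
    (s ×ˢ t).ncard = s.ncard * t.ncard := by
  rw [← Nat.card_coe_set_eq, ← Nat.card_coe_set_eq, ← Nat.card_coe_set_eq,
    Nat.card_congr (Equiv.Set.prod s t), Nat.card_prod]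

/-- Concatenation set. -/
private def pfKeyCat (T Z : Set (List A)) : Set (List A) :=
  (fun p : List A × List A => p.1 ++ p.2) '' (T ×ˢ Z)

omit [Fintype A] in
private lemma pfKey_mem_cat {T Z : Set (List A)} {w : List A} :
    w ∈ pfKeyCat T Z ↔ ∃ x z, x ∈ T ∧ z ∈ Z ∧ x ++ z = w := by
  simp only [pfKeyCat, Set.mem_image, Set.mem_prod, Prod.exists]
  tauto

omit [Fintype A] in
private lemma pfKey_cat_ncard {a : ℕ} {T Z : Set (List A)} (hT : ∀ w ∈ T, w.length = a) :
    (pfKeyCat T Z).ncard = T.ncard * Z.ncard := by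
  rw [pfKeyCat, Set.ncard_image_of_injOn, pfKey_ncard_sprod]
  rintro ⟨x₁, z₁⟩ ⟨hx₁, hz₁⟩ ⟨x₂, z₂⟩ ⟨hx₂, hz₂⟩ h
  obtain ⟨h1, h2⟩ := List.append_inj h (by rw [hT _ hx₁, hT _ hx₂])
  simp only [Prod.mk.injEq]
  exact ⟨h1, h2⟩

private lemma pfKey_ncard_union_iUnion {α : Type*} {k : ℕ} (G : Set α) (F : Fin k → Set α)
    (hG : G.Finite) (hF : ∀ i, (F i).Finite) (hGF : ∀ i, Disjoint G (F i))
    (hFF : ∀ i j, i ≠ j → Disjoint (F i) (F j)) :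
    (G ∪ ⋃ i, F i).ncard = G.ncard + ∑ i, (F i).ncard := by
  classical
  have hU : (⋃ i, F i).Finite := Set.finite_iUnion hF
  rw [Set.ncard_union_eq (Set.disjoint_iUnion_right.mpr hGF) hG hU,
    Set.ncard_eq_toFinset_card _ hU]
  have hEq : hU.toFinset = Finset.univ.biUnion (fun i => (hF i).toFinset) := by
    ext x; simp
  rw [hEq, Finset.card_biUnion (fun i _ j _ hij => by
    simpa [Set.Finite.disjoint_toFinset] using hFF i j hij)]
  congr 1
  exact Finset.sum_congr rfl fun i _ => (Set.ncard_eq_toFinset_card _ (hF i)).symm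

end KeyAux

/-- The key inequality (Proposition 3.1): for a product-free `S` and positive integers
`ℓ_1 < ℓ_2 < ⋯ < ℓ_k < n`,
`∑ d_S(ℓ_i; ℓ_1,…,ℓ_{i-1}) d_S(n - ℓ_i) + d_S(n)
  ≤ ∑ d_S(ℓ_i; ℓ_1,…,ℓ_{i-1}) + d_S(n; ℓ_1,…,ℓ_k) ≤ 1`. -/
theorem productFree_key_inequality
    {A : Type*} [Fintype A] [Nonempty A] {S : Set (List A)}
    (hS : [] ∉ S) (hPF : ProductFree S)
    {k n : ℕ} (ℓ : Fin k → ℕ) (hmono : StrictMono ℓ)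
    (hpos : ∀ i, 0 < ℓ i) (hlt : ∀ i, ℓ i < n) :
    (∑ i, restrictedDensity A S (ℓ i) (ℓ '' {j | j < i}) * layerDensity A S (n - ℓ i)) +
        layerDensity A S n ≤
      (∑ i, restrictedDensity A S (ℓ i) (ℓ '' {j | j < i})) +
        restrictedDensity A S n (Set.range ℓ) ∧
    (∑ i, restrictedDensity A S (ℓ i) (ℓ '' {j | j < i})) +
        restrictedDensity A S n (Set.range ℓ) ≤ 1 := by
  classical
  set q := Fintype.card A with hqdef
  have hq0 : 0 < q := Fintype.card_pos
  have hqR : (0 : ℝ) < (q : ℝ) := by exact_mod_cast hq0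
  -- The basic sets
  set T : Fin k → Set (List A) := fun i =>
    {w | w ∈ S ∧ w.length = ℓ i ∧ ∀ x ∈ S, x.length ∈ ℓ '' {j | j < i} → ¬ x <+: w} with hT
  set Tn : Set (List A) :=
    {w | w ∈ S ∧ w.length = n ∧ ∀ x ∈ S, x.length ∈ Set.range ℓ → ¬ x <+: w} with hTn
  set Sl : ℕ → Set (List A) := fun m => {w ∈ S | w.length = m} with hSl
  -- extension sets
  set E : Fin k → Set (List A) := fun i => pfKeyCat (T i) {z | z.length = n - ℓ i} with hE
  set E' : Fin k → Set (List A) := fun i => pfKeyCat (T i) (Sl (n - ℓ i)) with hE'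
  -- finiteness
  have hTfin : ∀ i, (T i).Finite := fun i =>
    (List.finite_length_eq A (ℓ i)).subset (fun w hw => hw.2.1)
  have hTnfin : Tn.Finite := (List.finite_length_eq A n).subset (fun w hw => hw.2.1)
  have hSlfin : ∀ m, (Sl m).Finite := fun m =>
    (List.finite_length_eq A m).subset (fun w hw => hw.2)
  have hEfin : ∀ i, (E i).Finite :=
    fun i => ((hTfin i).prod (List.finite_length_eq A (n - ℓ i))).image _
  have hE'fin : ∀ i, (E' i).Finite :=
    fun i => ((hTfin i).prod (hSlfin (n - ℓ i))).image _
  -- cardinalities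
  have hTlen : ∀ i, ∀ w ∈ T i, w.length = ℓ i := fun i w hw => hw.2.1
  have hEcard : ∀ i, (E i).ncard = (T i).ncard * q ^ (n - ℓ i) := fun i => by
    rw [hE, pfKey_cat_ncard (hTlen i), pfKey_layer_ncard]
  have hE'card : ∀ i, (E' i).ncard = (T i).ncard * (Sl (n - ℓ i)).ncard := fun i =>
    pfKey_cat_ncard (hTlen i)
  -- E i is inside the layer of length n
  have hEsub : ∀ i, E i ⊆ {w : List A | w.length = n} := by
    intro i w hw
    obtain ⟨x, z, hx, hz, rfl⟩ := pfKey_mem_cat.mp hw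
    have h1 := hTlen i x hx
    have h2 : z.length = n - ℓ i := hz
    have h3 := (hlt i).le
    simp only [Set.mem_setOf_eq, List.length_append]
    omega
  -- E' i ⊆ E i
  have hE'subE : ∀ i, E' i ⊆ E i := by
    intro i w hw
    obtain ⟨x, z, hx, hz, rfl⟩ := pfKey_mem_cat.mp hw
    exact pfKey_mem_cat.mpr ⟨x, z, hx, hz.2, rfl⟩
  -- pairwise disjointness of E
  have hEdisj' : ∀ i j : Fin k, i < j → Disjoint (E i) (E j) := by
    intro i j hij
    rw [Set.disjoint_left]
    intro w hwi hwj
    obtain ⟨x, z, hx, hz, hxz⟩ := pfKey_mem_cat.mp hwi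
    obtain ⟨x', z', hx', hz', hxz'⟩ := pfKey_mem_cat.mp hwj
    have hpx : x <+: w := hxz ▸ ⟨z, rfl⟩
    have hpx' : x' <+: w := hxz' ▸ ⟨z', rfl⟩
    have hlen : x.length ≤ x'.length := by
      rw [hTlen i x hx, hTlen j x' hx']
      exact (hmono hij).le
    have hpref : x <+: x' := List.prefix_of_prefix_length_le hpx hpx' hlen
    exact hx'.2.2 x hx.1 ⟨i, hij, (hTlen i x hx).symm⟩ hpref
  have hEdisj : ∀ i j : Fin k, i ≠ j → Disjoint (E i) (E j) := by
    intro i j hij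
    rcases lt_or_gt_of_ne hij with h | h
    · exact hEdisj' i j h
    · exact (hEdisj' j i h).symm
  -- Tn is disjoint from each E i
  have hTnE : ∀ i, Disjoint Tn (E i) := by
    intro i
    rw [Set.disjoint_left]
    intro w hw hwE
    obtain ⟨x, z, hx, hz, hxz⟩ := pfKey_mem_cat.mp hwE
    exact hw.2.2 x hx.1 ⟨i, (hTlen i x hx).symm⟩ (hxz ▸ ⟨z, rfl⟩)
  -- Sl n is disjoint from each E' i  (product-freeness)
  have hSlE' : ∀ i, Disjoint (Sl n) (E' i) := by
    intro i
    rw [Set.disjoint_left]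
    intro w hw hwE
    obtain ⟨x, z, hx, hz, hxz⟩ := pfKey_mem_cat.mp hwE
    exact hPF x hx.1 z hz.1 (hxz ▸ hw.1)
  -- the covering: Sl n ⊆ Tn ∪ ⋃ i, E i
  have hcover : Sl n ⊆ Tn ∪ ⋃ i, E i := by
    intro w hw
    by_cases hwTn : w ∈ Tn
    · exact Or.inl hwTn
    right
    have : ¬ (∀ x ∈ S, x.length ∈ Set.range ℓ → ¬ x <+: w) := by
      intro h; exact hwTn ⟨hw.1, hw.2, h⟩
    push_neg at this
    obtain ⟨x₀, hx₀S, ⟨i₀, hi₀⟩, hx₀p⟩ := this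
    set P : Fin k → Prop := fun i => ∃ x, x ∈ S ∧ x.length = ℓ i ∧ x <+: w with hP
    have hPne : (Finset.univ.filter P).Nonempty :=
      ⟨i₀, by simp only [Finset.mem_filter, Finset.mem_univ, true_and]
              exact ⟨x₀, hx₀S, hi₀.symm, hx₀p⟩⟩
    set i := (Finset.univ.filter P).min' hPne with hi
    have hPi : P i := (Finset.mem_filter.mp ((Finset.univ.filter P).min'_mem hPne)).2
    have hmin : ∀ j, P j → i ≤ j := fun j hj =>
      Finset.min'_le _ j (by simp [hj])
    obtain ⟨x, hxS, hxlen, hxp⟩ := hPi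
    have hxT : x ∈ T i := by
      refine ⟨hxS, hxlen, ?_⟩
      rintro y hyS ⟨j, hji, hylen⟩ hyx
      exact absurd (hmin j ⟨y, hyS, hylen.symm, hyx.trans hxp⟩) (not_le.mpr hji)
    refine Set.mem_iUnion.mpr ⟨i, ?_⟩
    obtain ⟨z, hz⟩ := hxp
    refine pfKey_mem_cat.mpr ⟨x, z, hxT, ?_, hz⟩
    have hwlen : w.length = n := hw.2
    simp only [Set.mem_setOf_eq]
    have : x.length + z.length = w.length := by rw [← hz]; simp
    omega
  -- Natural-number inequality (II)
  have hII : Tn.ncard + ∑ i, (T i).ncard * q ^ (n - ℓ i) ≤ q ^ n := by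
    have hsub : Tn ∪ ⋃ i, E i ⊆ {w : List A | w.length = n} :=
      Set.union_subset (fun w hw => hw.2.1) (Set.iUnion_subset hEsub)
    have := Set.ncard_le_ncard hsub (List.finite_length_eq A n)
    rw [pfKey_ncard_union_iUnion Tn E hTnfin hEfin hTnE hEdisj, pfKey_layer_ncard] at this
    calc Tn.ncard + ∑ i, (T i).ncard * q ^ (n - ℓ i)
        = Tn.ncard + ∑ i, (E i).ncard := by
          congr 1; exact Finset.sum_congr rfl fun i _ => (hEcard i).symm
      _ ≤ q ^ n := this
  -- Natural-number inequality (I)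
  have hI : (Sl n).ncard + ∑ i, (T i).ncard * (Sl (n - ℓ i)).ncard ≤
      Tn.ncard + ∑ i, (T i).ncard * q ^ (n - ℓ i) := by
    have hsub : Sl n ∪ ⋃ i, E' i ⊆ Tn ∪ ⋃ i, E i := by
      apply Set.union_subset hcover
      exact Set.iUnion_subset fun i =>
        (hE'subE i).trans ((Set.subset_iUnion E i).trans Set.subset_union_right)
    have hmono' := Set.ncard_le_ncard hsub
      ((hTnfin.union (Set.finite_iUnion hEfin)))
    rw [pfKey_ncard_union_iUnion (Sl n) E' (hSlfin n) hE'fin hSlE'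
        (fun i j hij => Set.disjoint_of_subset (hE'subE i) (hE'subE j) (hEdisj i j hij)),
      pfKey_ncard_union_iUnion Tn E hTnfin hEfin hTnE hEdisj] at hmono'
    calc (Sl n).ncard + ∑ i, (T i).ncard * (Sl (n - ℓ i)).ncard
        = (Sl n).ncard + ∑ i, (E' i).ncard := by
          congr 1; exact Finset.sum_congr rfl fun i _ => (hE'card i).symm
      _ ≤ Tn.ncard + ∑ i, (E i).ncard := hmono'
      _ = Tn.ncard + ∑ i, (T i).ncard * q ^ (n - ℓ i) := by
          congr 1; exact Finset.sum_congr rfl fun i _ => hEcard i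
  -- densities as ncards
  have hrdef : ∀ i, restrictedDensity A S (ℓ i) (ℓ '' {j | j < i}) =
      ((T i).ncard : ℝ) / (q : ℝ) ^ (ℓ i) := fun i => rfl
  have hrn : restrictedDensity A S n (Set.range ℓ) = (Tn.ncard : ℝ) / (q : ℝ) ^ n := rfl
  have hld : ∀ m, layerDensity A S m = ((Sl m).ncard : ℝ) / (q : ℝ) ^ m := fun m => rfl
  have hpowne : ∀ m : ℕ, ((q : ℝ) ^ m) ≠ 0 := fun m => (pow_pos hqR m).ne'
  have hpowmul : ∀ i : Fin k, (q : ℝ) ^ (ℓ i) * (q : ℝ) ^ (n - ℓ i) = (q : ℝ) ^ n := by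
    intro i
    rw [← pow_add]
    congr 1
    have := hlt i
    omega
  have hterm1 : ∀ i : Fin k,
      restrictedDensity A S (ℓ i) (ℓ '' {j | j < i}) * layerDensity A S (n - ℓ i) =
        (((T i).ncard * (Sl (n - ℓ i)).ncard : ℕ) : ℝ) / (q : ℝ) ^ n := by
    intro i
    rw [hrdef, hld, div_mul_div_comm, hpowmul, Nat.cast_mul]
  have hterm2 : ∀ i : Fin k,
      restrictedDensity A S (ℓ i) (ℓ '' {j | j < i}) =
        (((T i).ncard * q ^ (n - ℓ i) : ℕ) : ℝ) / (q : ℝ) ^ n := by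
    intro i
    rw [hrdef, Nat.cast_mul, Nat.cast_pow, ← hpowmul i,
      mul_div_mul_right _ _ (hpowne (n - ℓ i))]
  constructor
  · -- first inequality
    simp only [hterm1]
    simp only [hterm2]
    rw [hrn, hld n, ← Finset.sum_div, ← Finset.sum_div, ← add_div, ← add_div,
      div_le_div_iff_of_pos_right (pow_pos hqR n)]
    have hIc : (((Sl n).ncard + ∑ i, (T i).ncard * (Sl (n - ℓ i)).ncard : ℕ) : ℝ) ≤
        ((Tn.ncard + ∑ i, (T i).ncard * q ^ (n - ℓ i) : ℕ) : ℝ) := by exact_mod_cast hI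
    push_cast at hIc ⊢
    linarith
  · -- second inequality
    simp only [hterm2]
    rw [hrn, ← Finset.sum_div, ← add_div, div_le_one (pow_pos hqR n)]
    have hIIc : ((Tn.ncard + ∑ i, (T i).ncard * q ^ (n - ℓ i) : ℕ) : ℝ) ≤ ((q ^ n : ℕ) : ℝ) := by
      exact_mod_cast hII
    push_cast at hIIc ⊢
    linarith
end

section
/- Let A be a nonempty finite alphabet. If S is a product-free subset of the free semigroup F_A, then for all positive integers m and n, d_S(m)·d_S(n) + d_S(m+n) ≤ 1. -/
open Filter

lemma ncard_length_eq (A : Type*) [Fintype A] (n : ℕ) :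
    Set.ncard {l : List A | l.length = n} = Fintype.card A ^ n := by
  have h : Nat.card (List.Vector A n) = Fintype.card A ^ n := by
    simp [Nat.card_eq_fintype_card, card_vector]
  rw [← Nat.card_coe_set_eq]
  exact h

/-- For a product-free set `S`: `d_S(m) * d_S(n) + d_S(m+n) ≤ 1`. -/
theorem productFree_density_ineq
    {A : Type*} [Fintype A] [Nonempty A] {S : Set (List A)}
    (hS : [] ∉ S) (hPF : ProductFree S) (m n : ℕ) (hm : 0 < m) (hn : 0 < n) :
    layerDensity A S m * layerDensity A S n + layerDensity A S (m + n) ≤ 1 := by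
  classical
  have hq : (0 : ℝ) < (Fintype.card A : ℝ) := by
    exact_mod_cast Fintype.card_pos
  set Tm : Set (List A) := {w ∈ S | w.length = m} with hTm
  set Tn : Set (List A) := {w ∈ S | w.length = n} with hTn
  set T : Set (List A) := {w ∈ S | w.length = m + n} with hT
  have hfin : ∀ k, ({w ∈ S | w.length = k} : Set (List A)).Finite := fun k =>
    (List.finite_length_eq A k).subset (fun w hw => hw.2)
  set P : Set (List A) := (fun p : List A × List A => p.1 ++ p.2) '' (Tm ×ˢ Tn) with hP
  have hPfin : P.Finite := ((hfin m).prod (hfin n)).image _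
  have hinj : Set.InjOn (fun p : List A × List A => p.1 ++ p.2) (Tm ×ˢ Tn) := by
    rintro ⟨x, y⟩ ⟨hx, hy⟩ ⟨x', y'⟩ ⟨hx', hy'⟩ h
    have hlen : x.length = x'.length := by rw [hx.2, hx'.2]
    obtain ⟨h1, h2⟩ := List.append_inj h hlen
    exact Prod.ext h1 h2
  have hPcard : P.ncard = Tm.ncard * Tn.ncard := by
    rw [Set.ncard_image_of_injOn hinj, ← Nat.card_coe_set_eq,
      Nat.card_congr (Equiv.Set.prod Tm Tn), Nat.card_prod,
      Nat.card_coe_set_eq, Nat.card_coe_set_eq]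
  have hdisj : Disjoint P T := by
    rw [Set.disjoint_left]
    rintro w ⟨⟨x, y⟩, ⟨hx, hy⟩, rfl⟩ hw
    exact hPF x hx.1 y hy.1 hw.1
  have hsub : P ∪ T ⊆ {l : List A | l.length = m + n} := by
    rintro w (⟨⟨x, y⟩, ⟨hx, hy⟩, rfl⟩ | hw)
    · simp [hx.2, hy.2]
    · exact hw.2
  have hcard : P.ncard + T.ncard ≤ Fintype.card A ^ (m + n) := by
    rw [← Set.ncard_union_eq hdisj hPfin (hfin _), ← ncard_length_eq A (m + n)]
    exact Set.ncard_le_ncard hsub (List.finite_length_eq A _)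
  have key : (Tm.ncard : ℝ) * Tn.ncard + T.ncard ≤ (Fintype.card A : ℝ) ^ (m + n) := by
    rw [hPcard] at hcard
    exact_mod_cast hcard
  unfold layerDensity
  rw [div_mul_div_comm, ← pow_add]
  rw [← add_div, div_le_one (by positivity)]
  exact key
end

section
/- Let A be a nonempty finite alphabet, let S be a product-free subset of the free semigroup F_A, and let φ = (√5 − 1)/2 be the unique positive solution of x² + x = 1. Then the set of positive integers {n : d_S(n) > φ} is sum-free, i.e., it contains no elements a, b, c (not necessarily distinct) with a + b = c. -/
open Filter

lemma layer_card_aux {A : Type*} [Fintype A] (n : ℕ) :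
    Nat.card {w : List A // w.length = n} = Fintype.card A ^ n := by
  have h : Nat.card (List.Vector A n) = Fintype.card A ^ n := by
    rw [Nat.card_eq_fintype_card]; exact card_vector n
  exact h

lemma count_aux {A : Type*} [Fintype A] {S : Set (List A)} (hPF : ProductFree S)
    (a b : ℕ) :
    ({w ∈ S | w.length = a + b} : Set (List A)).ncard
      + ({w ∈ S | w.length = a} : Set (List A)).ncard
        * ({w ∈ S | w.length = b} : Set (List A)).ncard
      ≤ Fintype.card A ^ (a + b) := by
  classical
  have hVfin : ∀ n : ℕ, Finite {w : List A // w.length = n} := fun n =>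
    Finite.of_equiv (List.Vector A n) (Equiv.refl _)
  have hfin : ∀ n : ℕ, Finite {w : List A // w ∈ S ∧ w.length = n} := fun n => by
    have := hVfin n
    exact Finite.of_injective (fun w => (⟨w.1, w.2.2⟩ : {w : List A // w.length = n}))
      (fun x y h => by
        simp only [Subtype.mk.injEq] at h
        exact Subtype.ext h)
  have ha := hfin a; have hb := hfin b; have hab := hfin (a + b)
  have hV := hVfin (a + b)
  set f : ({w : List A // w ∈ S ∧ w.length = a + b} ⊕
      ({w : List A // w ∈ S ∧ w.length = a} × {w : List A // w ∈ S ∧ w.length = b})) →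
      {w : List A // w.length = a + b} :=
    fun z => match z with
    | Sum.inl w => ⟨w.1, w.2.2⟩
    | Sum.inr (x, y) => ⟨x.1 ++ y.1, by simp [x.2.2, y.2.2]⟩ with hf
  have hinj : Function.Injective f := by
    rintro (w | ⟨x, y⟩) (w' | ⟨x', y'⟩) h <;>
      simp only [f, Subtype.mk.injEq] at h
    · exact congrArg Sum.inl (Subtype.ext h)
    · exact absurd (h ▸ w.2.1) (hPF x'.1 x'.2.1 y'.1 y'.2.1)
    · exact absurd (h.symm ▸ w'.2.1) (hPF x.1 x.2.1 y.1 y.2.1)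
    · have hv : x.1 ++ y.1 = x'.1 ++ y'.1 := h
      have hxl : x.1.length = x'.1.length := by rw [x.2.2, x'.2.2]
      obtain ⟨h1, h2⟩ := List.append_inj hv hxl
      exact congrArg Sum.inr (Prod.ext (Subtype.ext h1) (Subtype.ext h2))
  have hle := Nat.card_le_card_of_injective f hinj
  rw [Nat.card_sum, Nat.card_prod, layer_card_aux] at hle
  have e1 : Nat.card {w : List A // w ∈ S ∧ w.length = a + b}
      = ({w ∈ S | w.length = a + b} : Set (List A)).ncard := rfl
  have e2 : Nat.card {w : List A // w ∈ S ∧ w.length = a}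
      = ({w ∈ S | w.length = a} : Set (List A)).ncard := rfl
  have e3 : Nat.card {w : List A // w ∈ S ∧ w.length = b}
      = ({w ∈ S | w.length = b} : Set (List A)).ncard := rfl
  rw [e1, e2, e3] at hle
  exact hle

/-- For a product-free `S`, the set of positive integers `n` with `d_S(n) > φ`, where
`φ = (√5 - 1)/2`, is sum-free. -/
theorem productFree_highDensity_lengths_sumFree
    {A : Type*} [Fintype A] [Nonempty A] {S : Set (List A)}
    (hS : [] ∉ S) (hPF : ProductFree S) :
    ∀ a ∈ {n : ℕ | 0 < n ∧ (Real.sqrt 5 - 1) / 2 < layerDensity A S n},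
      ∀ b ∈ {n : ℕ | 0 < n ∧ (Real.sqrt 5 - 1) / 2 < layerDensity A S n},
        a + b ∉ {n : ℕ | 0 < n ∧ (Real.sqrt 5 - 1) / 2 < layerDensity A S n} := by
  intro a ha b hb hab
  obtain ⟨-, hda⟩ := ha
  obtain ⟨-, hdb⟩ := hb
  obtain ⟨-, hdab⟩ := hab
  set φ : ℝ := (Real.sqrt 5 - 1) / 2 with hφdef
  have h5 : Real.sqrt 5 ^ 2 = 5 := Real.sq_sqrt (by norm_num)
  have h1lt : (1:ℝ) < Real.sqrt 5 := by
    nlinarith [Real.sqrt_nonneg 5]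
  have hφpos : 0 < φ := by rw [hφdef]; linarith
  have hφsq : φ * φ = 1 - φ := by rw [hφdef]; nlinarith
  have hk1 : (1:ℝ) ≤ (Fintype.card A : ℝ) := by exact_mod_cast Fintype.card_pos
  have hkpow : (0:ℝ) < (Fintype.card A : ℝ) ^ (a + b) := by positivity
  have key : layerDensity A S (a + b) + layerDensity A S a * layerDensity A S b ≤ 1 := by
    unfold layerDensity
    rw [div_mul_div_comm, ← pow_add, ← add_div, div_le_one hkpow]
    exact_mod_cast count_aux hPF a b
  have hprod : φ * φ < layerDensity A S a * layerDensity A S b :=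
    mul_lt_mul'' hda hdb hφpos.le hφpos.le
  linarith
end

section
/- Let A be a nonempty finite alphabet and let φ = (√5 − 1)/2. If S is a product-free subset of the free semigroup F_A, then the upper asymptotic density of S is at most (1 + φ)/2. -/
open Filter

/-! ### Auxiliary lemmas for the main theorem -/

section Aux

variable {A : Type*} [Fintype A] [Nonempty A] {S : Set (List A)}

private lemma pf_layer_ncard (n : ℕ) :
    ({w : List A | w.length = n}).ncard = Fintype.card A ^ n := by
  rw [← Nat.card_coe_set_eq]
  have e : ({w : List A | w.length = n} : Set (List A)) ≃ List.Vector A n :=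
    Equiv.subtypeEquivRight (fun x => Iff.rfl)
  rw [Nat.card_congr e, Nat.card_eq_fintype_card, card_vector]

private lemma pf_key_count (hPF : ProductFree S) (i : ℕ) :
    ({w ∈ S | w.length = 2*i} : Set (List A)).ncard
      + ({w ∈ S | w.length = i} : Set (List A)).ncard ^ 2
      ≤ Fintype.card A ^ (2*i) := by
  classical
  have hfin : ∀ m : ℕ, ({w ∈ S | w.length = m} : Set (List A)).Finite :=
    fun m => (List.finite_length_eq A m).subset (fun w hw => hw.2)
  set P := (hfin i).toFinset with hP
  set Q := (hfin (2*i)).toFinset with hQ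
  set I : Finset (List A) := (P ×ˢ P).image (fun p => p.1 ++ p.2) with hI
  have hmemP : ∀ x : List A, x ∈ P ↔ x ∈ S ∧ x.length = i := by
    intro x; rw [hP, Set.Finite.mem_toFinset]; exact Iff.rfl
  have hmemQ : ∀ x : List A, x ∈ Q ↔ x ∈ S ∧ x.length = 2*i := by
    intro x; rw [hQ, Set.Finite.mem_toFinset]; exact Iff.rfl
  have hcardI : I.card = P.card ^ 2 := by
    rw [hI, Finset.card_image_of_injOn, Finset.card_product, sq]
    rintro ⟨x₁, y₁⟩ h₁ ⟨x₂, y₂⟩ h₂ h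
    simp only [Finset.coe_product, Set.mem_prod, Finset.mem_coe, hmemP] at h₁ h₂
    obtain ⟨hx, hy⟩ := List.append_inj h (h₁.1.2.trans h₂.1.2.symm)
    simpa using And.intro hx hy
  have hdisj : Disjoint I Q := by
    rw [Finset.disjoint_left]
    rintro w hw hwQ
    simp only [hI, Finset.mem_image, Finset.mem_product, hmemP] at hw
    obtain ⟨⟨x, y⟩, ⟨hx, hy⟩, rfl⟩ := hw
    exact hPF x hx.1 y hy.1 ((hmemQ _).mp hwQ).1
  have hsub : I ∪ Q ⊆ (List.finite_length_eq A (2*i)).toFinset := by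
    intro w hw
    rw [Set.Finite.mem_toFinset]
    rcases Finset.mem_union.mp hw with hw | hw
    · simp only [hI, Finset.mem_image, Finset.mem_product, hmemP] at hw
      obtain ⟨⟨x, y⟩, ⟨hx, hy⟩, rfl⟩ := hw
      simp only [Set.mem_setOf_eq, List.length_append, hx.2, hy.2]
      omega
    · exact ((hmemQ _).mp hw).2
  have hcards := Finset.card_le_card hsub
  rw [Finset.card_union_of_disjoint hdisj, hcardI] at hcards
  have hlay : (List.finite_length_eq A (2*i)).toFinset.card = Fintype.card A ^ (2*i) := by
    rw [← Set.ncard_eq_toFinset_card _ (List.finite_length_eq A (2*i))]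
    exact pf_layer_ncard (2*i)
  rw [Set.ncard_eq_toFinset_card _ (hfin (2*i)), Set.ncard_eq_toFinset_card _ (hfin i),
    ← hP, ← hQ]
  rw [hlay] at hcards
  linarith

private lemma pf_d_nonneg (n : ℕ) : 0 ≤ layerDensity A S n := by
  unfold layerDensity; positivity

private lemma pf_d_le_one (n : ℕ) : layerDensity A S n ≤ 1 := by
  have hk : (0:ℝ) < (Fintype.card A : ℝ) ^ n := by
    have := Fintype.card_pos (α := A); positivity
  rw [layerDensity, div_le_one hk]
  have h1 : ({w ∈ S | w.length = n} : Set (List A)).ncard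
      ≤ ({w : List A | w.length = n}).ncard :=
    Set.ncard_le_ncard (fun w hw => hw.2) (List.finite_length_eq A n)
  calc (({w ∈ S | w.length = n} : Set (List A)).ncard : ℝ)
      ≤ (({w : List A | w.length = n}).ncard : ℝ) := by exact_mod_cast h1
    _ = (Fintype.card A : ℝ) ^ n := by rw [pf_layer_ncard]; push_cast; ring

private lemma pf_key_density (hPF : ProductFree S) (i : ℕ) :
    layerDensity A S (2*i) ≤ 1 - layerDensity A S i ^ 2 := by
  have hk0 : (0:ℝ) < (Fintype.card A : ℝ) := by exact_mod_cast Fintype.card_pos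
  have hki : (0:ℝ) < (Fintype.card A : ℝ) ^ i := by positivity
  have h2i : (0:ℝ) < (Fintype.card A : ℝ) ^ (2*i) := by positivity
  have hc : (({w ∈ S | w.length = 2*i} : Set (List A)).ncard : ℝ)
      + (({w ∈ S | w.length = i} : Set (List A)).ncard : ℝ) ^ 2
      ≤ (Fintype.card A : ℝ) ^ (2*i) := by exact_mod_cast pf_key_count hPF i
  rw [layerDensity, layerDensity, div_le_iff₀ h2i, sub_mul, one_mul]
  have hpow : (Fintype.card A : ℝ) ^ (2*i) = ((Fintype.card A : ℝ) ^ i) ^ 2 := by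
    rw [← pow_mul, mul_comm]
  rw [div_pow, hpow]
  field_simp
  nlinarith [hc, sq_nonneg ((({w ∈ S | w.length = i} : Set (List A)).ncard : ℝ))]

private lemma pf_split_sum (d : ℕ → ℝ) (m : ℕ) :
    ∑ i ∈ Finset.Icc 1 (2*m), d i
      = (∑ j ∈ Finset.Icc 1 m, d (2*j)) + ∑ j ∈ Finset.Icc 1 m, d (2*j - 1) := by
  induction m with
  | zero => simp
  | succ m ih =>
    have h1 : 2*(m+1) = (2*m + 1) + 1 := by ring
    rw [h1, Finset.sum_Icc_succ_top (by omega), Finset.sum_Icc_succ_top (by omega), ih,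
      Finset.sum_Icc_succ_top (le_add_self : 1 ≤ m + 1),
      Finset.sum_Icc_succ_top (le_add_self : 1 ≤ m + 1)]
    have e1 : 2*(m+1) = 2*m + 1 + 1 := by ring
    have e2 : 2*(m+1) - 1 = 2*m + 1 := by omega
    rw [e2, e1]; ring

private lemma pf_sum_tail (d : ℕ → ℝ) (hd1 : ∀ n, d n ≤ 1) (m : ℕ) :
    ∑ i ∈ Finset.Icc 1 (2*m), d i ≤ (∑ i ∈ Finset.Icc 1 m, d i) + m := by
  have hsplit : Finset.Icc 1 (2*m) = Finset.Ioc 0 (2*m) := rfl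
  have hco : ∑ i ∈ Finset.Ioc 0 m, d i + ∑ i ∈ Finset.Ioc m (2*m), d i
      = ∑ i ∈ Finset.Ioc 0 (2*m), d i :=
    Finset.sum_Ioc_consecutive _ (Nat.zero_le m) (by omega)
  have htail : ∑ i ∈ Finset.Ioc m (2*m), d i ≤ m := by
    calc ∑ i ∈ Finset.Ioc m (2*m), d i ≤ ∑ i ∈ Finset.Ioc m (2*m), 1 :=
          Finset.sum_le_sum (fun i _ => hd1 i)
      _ = ((2*m - m : ℕ) : ℝ) := by rw [Finset.sum_const, Nat.card_Ioc, nsmul_eq_mul, mul_one]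
      _ = (m:ℝ) := by congr 1; omega
  have e : Finset.Icc 1 m = Finset.Ioc 0 m := rfl
  rw [hsplit, e, ← hco]
  linarith

private lemma pf_main_bound (d : ℕ → ℝ) (hd0 : ∀ n, 0 ≤ d n) (hd1 : ∀ n, d n ≤ 1)
    (hkey : ∀ i, d (2*i) ≤ 1 - d i ^ 2) (m : ℕ) (hm : 1 ≤ m) :
    ∑ i ∈ Finset.Icc 1 (2*m), d i ≤ (1 + Real.sqrt 5) / 2 * m := by
  set T2 := ∑ i ∈ Finset.Icc 1 (2*m), d i with hT2
  set T1 := ∑ i ∈ Finset.Icc 1 m, d i with hT1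
  set Sq := ∑ i ∈ Finset.Icc 1 m, d i ^ 2 with hSq
  have hM : (1:ℝ) ≤ (m:ℝ) := by exact_mod_cast hm
  have hcard : (Finset.Icc 1 m).card = m := by rw [Nat.card_Icc]; omega
  have hE : ∑ j ∈ Finset.Icc 1 m, d (2*j) ≤ (m:ℝ) - Sq := by
    calc ∑ j ∈ Finset.Icc 1 m, d (2*j) ≤ ∑ j ∈ Finset.Icc 1 m, (1 - d j ^ 2) :=
          Finset.sum_le_sum (fun j _ => hkey j)
      _ = (m:ℝ) - Sq := by rw [Finset.sum_sub_distrib, Finset.sum_const, hcard]; simp [hSq]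
  have hO : ∑ j ∈ Finset.Icc 1 m, d (2*j - 1) ≤ (m:ℝ) := by
    calc ∑ j ∈ Finset.Icc 1 m, d (2*j-1) ≤ ∑ j ∈ Finset.Icc 1 m, 1 :=
          Finset.sum_le_sum (fun j _ => hd1 _)
      _ = (m:ℝ) := by rw [Finset.sum_const, hcard]; simp
  have hup : T2 ≤ 2*(m:ℝ) - Sq := by
    rw [hT2, pf_split_sum]; linarith
  have hcs : T1 ^ 2 ≤ (m:ℝ) * Sq := by
    have := sq_sum_le_card_mul_sum_sq (s := Finset.Icc 1 m) (f := d)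
    rw [hcard] at this
    exact_mod_cast this
  have hlow : T2 - (m:ℝ) ≤ T1 := by
    have := pf_sum_tail d hd1 m; linarith
  have hT1nn : 0 ≤ T1 := Finset.sum_nonneg (fun i _ => hd0 i)
  have hr : Real.sqrt 5 ^ 2 = 5 := Real.sq_sqrt (by norm_num)
  have hr2 : (2:ℝ) ≤ Real.sqrt 5 := by nlinarith [Real.sqrt_nonneg 5, hr]
  rcases le_or_gt T2 (m:ℝ) with h | h
  · nlinarith
  · have h2 : (T2 - m)^2 ≤ T1^2 := by nlinarith
    have h3 : (T2 - m)^2 ≤ (m:ℝ) * Sq := le_trans h2 hcs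
    have h4 : (m:ℝ) * T2 ≤ 2*(m:ℝ)^2 - (T2 - m)^2 := by nlinarith
    by_contra hcon
    push_neg at hcon
    have hpos1 : 0 < 2*T2 - (m:ℝ) - Real.sqrt 5 * m := by nlinarith
    have hpos2 : 0 < 2*T2 - (m:ℝ) + Real.sqrt 5 * m := by nlinarith [Real.sqrt_nonneg 5]
    nlinarith [mul_pos hpos1 hpos2, h4, hr]

end Aux

/-- Product-free subsets of the free semigroup have upper asymptotic density at most
`(1 + φ)/2`, where `φ = (√5 - 1)/2`. -/
theorem productFree_upperAsympDensity_le
    {A : Type*} [Fintype A] [Nonempty A] {S : Set (List A)}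
    (hS : [] ∉ S) (hPF : ProductFree S) :
    upperAsympDensity A S ≤ (1 + (Real.sqrt 5 - 1) / 2) / 2 := by
  have hd0 : ∀ n, 0 ≤ layerDensity A S n := pf_d_nonneg
  have hd1 : ∀ n, layerDensity A S n ≤ 1 := pf_d_le_one
  have hkey : ∀ i, layerDensity A S (2*i) ≤ 1 - layerDensity A S i ^ 2 :=
    pf_key_density hPF
  set c : ℝ := (1 + Real.sqrt 5) / 4 with hc
  have hceq : (1 + (Real.sqrt 5 - 1) / 2) / 2 = c := by rw [hc]; ring
  have hcnn : (0:ℝ) ≤ c := by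
    rw [hc]; positivity
  rw [hceq]
  -- partial sums bound
  have hTe : ∀ m : ℕ, ∑ i ∈ Finset.Icc 1 (2*m), layerDensity A S i ≤ c * (2*m : ℕ) := by
    intro m
    rcases Nat.eq_zero_or_pos m with rfl | hm1
    · simp
    · have h := pf_main_bound (layerDensity A S) hd0 hd1 hkey m hm1
      have he : c * ((2*m : ℕ) : ℝ) = (1 + Real.sqrt 5) / 2 * m := by
        rw [hc]; push_cast; ring
      rw [he]; exact h
  have hT : ∀ n : ℕ, ∑ i ∈ Finset.Icc 1 n, layerDensity A S i ≤ c * n + 1 := by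
    intro n
    rcases Nat.even_or_odd n with ⟨m, hm⟩ | ⟨m, hm⟩
    · have hm' : n = 2*m := by omega
      subst hm'
      have := hTe m
      linarith
    · subst hm
      have hstep : ∑ i ∈ Finset.Icc 1 (2*m + 1), layerDensity A S i
          = (∑ i ∈ Finset.Icc 1 (2*m), layerDensity A S i) + layerDensity A S (2*m+1) :=
        Finset.sum_Icc_succ_top (by omega) _
      have h1 := hTe m
      have h2 := hd1 (2*m+1)
      have hmono : c * ((2*m : ℕ) : ℝ) ≤ c * ((2*m + 1 : ℕ) : ℝ) := by
        apply mul_le_mul_of_nonneg_left _ hcnn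
        push_cast; linarith
      rw [hstep]
      calc (∑ i ∈ Finset.Icc 1 (2*m), layerDensity A S i) + layerDensity A S (2*m+1)
          ≤ c * ((2*m : ℕ) : ℝ) + 1 := by linarith
        _ ≤ c * ((2*m + 1 : ℕ) : ℝ) + 1 := by linarith
  -- pass to limsup
  have hg : Tendsto (fun n : ℕ => c + 1/(n:ℝ)) atTop (nhds c) := by
    have h0 := tendsto_one_div_atTop_nhds_zero_nat (𝕜 := ℝ)
    have := Tendsto.add (tendsto_const_nhds (x := c) (f := atTop)) h0
    simpa using this
  have hle : (fun n : ℕ => (∑ i ∈ Finset.Icc 1 n, layerDensity A S i) / n)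
      ≤ᶠ[atTop] fun n : ℕ => c + 1/(n:ℝ) := by
    filter_upwards [eventually_ge_atTop 1] with n hn
    have hn0 : (0:ℝ) < (n:ℝ) := by exact_mod_cast hn
    rw [div_le_iff₀ hn0]
    have h := hT n
    have : (c + 1/(n:ℝ)) * n = c * n + 1 := by field_simp
    linarith
  have hco : IsCoboundedUnder (· ≤ ·) atTop
      (fun n : ℕ => (∑ i ∈ Finset.Icc 1 n, layerDensity A S i) / n) :=
    isCoboundedUnder_le_of_le atTop (x := 0)
      (fun n => div_nonneg (Finset.sum_nonneg fun i _ => hd0 i) (Nat.cast_nonneg n))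
  have hb : IsBoundedUnder (· ≤ ·) atTop (fun n : ℕ => c + 1/(n:ℝ)) :=
    hg.isBoundedUnder_le
  calc upperAsympDensity A S
      ≤ limsup (fun n : ℕ => c + 1/(n:ℝ)) atTop := limsup_le_limsup hle hco hb
    _ = c := hg.limsup_eq
end

section
/- Let A be a nonempty finite alphabet, let S be a product-free subset of the free semigroup F_A, and suppose there exist positive integers ℓ_1 < ℓ_2 < … < ℓ_k such that d_S(ℓ_1) + d_S(ℓ_2; ℓ_1) + … + d_S(ℓ_k; ℓ_1, …, ℓ_{k−1}) ≥ 1 − 1/2^k. Then the upper Banach density of S is at most 2^k/(2^{k+1} − 1). -/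
open Filter

noncomputable def WW (A : Type*) [Fintype A] (n : ℕ) : Finset (List A) :=
  (Finset.univ : Finset (List.Vector A n)).map (⟨Subtype.val, Subtype.val_injective⟩ : List.Vector A n ↪ List A)

theorem mem_WW {A : Type*} [Fintype A] {n : ℕ} {w : List A} : w ∈ WW A n ↔ w.length = n := by
  simp only [WW, Finset.mem_map, Finset.mem_univ, Function.Embedding.coeFn_mk, true_and]
  constructor
  · rintro ⟨⟨a, ha⟩, rfl⟩; exact ha
  · intro h; exact ⟨⟨w, h⟩, rfl⟩

theorem card_WW (A : Type*) [Fintype A] (n : ℕ) : (WW A n).card = Fintype.card A ^ n := by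
  rw [show (WW A n).card = (Finset.univ : Finset (List.Vector A n)).card from Finset.card_map _,
    Finset.card_univ, card_vector]

/-- Splitting a sum over words of length `n` at position `i ≤ n`. -/
theorem sum_WW_split {A : Type*} [Fintype A] {i n : ℕ} (h : i ≤ n) {M : Type*} [AddCommMonoid M]
    (g : List A → List A → M) :
    ∑ w ∈ WW A n, g (w.take i) (w.drop i) = ∑ b ∈ WW A i, ∑ u ∈ WW A (n - i), g b u := by
  rw [← Finset.sum_product']
  refine Finset.sum_bij' (fun w _ => (w.take i, w.drop i)) (fun p _ => p.1 ++ p.2) ?_ ?_ ?_ ?_ ?_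
  · intro w hw
    rw [mem_WW] at hw
    simp only [Finset.mem_product, mem_WW, List.length_take, List.length_drop]
    omega
  · rintro ⟨b, u⟩ hp
    simp only [Finset.mem_product, mem_WW] at hp
    rw [mem_WW]
    simp only [List.length_append, hp.1, hp.2]
    omega
  · intro w _; exact List.take_append_drop i w
  · rintro ⟨b, u⟩ hp
    simp only [Finset.mem_product, mem_WW] at hp
    simp [List.take_append, List.drop_append, hp.1, h]
  · intros; rfl

open scoped Classical

/-- Layer of `S` at length `n` as a Finset. -/
noncomputable def Sf {A : Type*} [Fintype A] (S : Set (List A)) (n : ℕ) : Finset (List A) :=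
  (WW A n).filter (· ∈ S)

theorem mem_Sf {A : Type*} [Fintype A] {S : Set (List A)} {n : ℕ} {w : List A} :
    w ∈ Sf S n ↔ w.length = n ∧ w ∈ S := by
  simp [Sf, mem_WW]

theorem layerDensity_eq_Sf {A : Type*} [Fintype A] (S : Set (List A)) (n : ℕ) :
    layerDensity A S n = (Sf S n).card / (Fintype.card A : ℝ) ^ n := by
  rw [layerDensity]
  congr 2
  rw [show ({w ∈ S | w.length = n} : Set (List A)) = ↑(Sf S n) by
    ext w; simp [mem_Sf, and_comm]]
  exact Set.ncard_coe_finset _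

theorem card_filter_take {A : Type*} [Fintype A] (S : Set (List A)) {i n : ℕ} (h : i ≤ n) :
    ((WW A n).filter (fun w => w.take i ∈ S)).card
      = (Sf S i).card * Fintype.card A ^ (n - i) := by
  rw [Finset.card_filter]
  have := sum_WW_split h (M := ℕ) (fun b u => if b ∈ S then 1 else 0)
  rw [this]
  rw [Sf, Finset.card_filter, Finset.sum_mul]
  refine Finset.sum_congr rfl fun b _ => ?_
  rw [Finset.sum_const, card_WW]
  split <;> simp

/-- number of `i ∈ [a,b]` such that the length-`i` prefix of `w` lies in `S`. -/
noncomputable def Hn {A : Type*} (S : Set (List A)) (a b : ℕ) (w : List A) : ℕ :=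
  ((Finset.Icc a b).filter (fun i => w.take i ∈ S)).card

theorem sum_Hn {A : Type*} [Fintype A] (S : Set (List A)) {a b n : ℕ} (h : b ≤ n) :
    ∑ w ∈ WW A n, Hn S a b w
      = ∑ i ∈ Finset.Icc a b, (Sf S i).card * Fintype.card A ^ (n - i) := by
  simp only [Hn, Finset.card_filter]
  rw [Finset.sum_comm]
  refine Finset.sum_congr rfl fun i hi => ?_
  rw [← Finset.card_filter, card_filter_take S (le_trans (Finset.mem_Icc.mp hi).2 h)]

theorem sum_prefix_cond {A : Type*} [Fintype A] {t : List A} {n : ℕ} (h : t.length ≤ n)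
    (f : List A → ℕ) :
    ∑ w ∈ WW A n, (if t <+: w then f (w.drop t.length) else 0)
      = ∑ u ∈ WW A (n - t.length), f u := by
  have key : ∀ w ∈ WW A n,
      (if t <+: w then f (w.drop t.length) else 0)
        = (fun b u => if b = t then f u else 0) (w.take t.length) (w.drop t.length) := by
    intro w hw
    rw [mem_WW] at hw
    congr 1
    simp only [eq_iff_iff]
    constructor
    · intro hp
      exact ((List.prefix_iff_eq_take.mp hp).symm)
    · intro he
      rw [← he]; exact List.take_prefix _ _
  calc ∑ w ∈ WW A n, (if t <+: w then f (w.drop t.length) else 0)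
      = ∑ w ∈ WW A n, (fun b u => if b = t then f u else 0) (w.take t.length) (w.drop t.length) :=
        Finset.sum_congr rfl key
    _ = ∑ b ∈ WW A t.length, ∑ u ∈ WW A (n - t.length), (if b = t then f u else 0) :=
        sum_WW_split h (fun b u => if b = t then f u else 0)
    _ = ∑ u ∈ WW A (n - t.length), f u := by
        rw [Finset.sum_eq_single t]
        · simp
        · intro b _ hb; simp [hb]
        · intro hnt; exact absurd (mem_WW.mpr rfl) hnt

theorem key_pointwise {A : Type*} {S : Set (List A)} (hPF : ProductFree S)
    {t w : List A} (ht : t ∈ S) (htw : t <+: w) {m n : ℕ} (hm : t.length < m)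
    (hw : w.length = n) :
    Hn S m n w + Hn S (m - t.length) (n - t.length) (w.drop t.length) ≤ n - m + 1 := by
  set p := t.length with hp
  have hpn : p ≤ n := hw ▸ htw.length_le
  have htake : w.take p = t := (List.prefix_iff_eq_take.mp htw).symm
  set hit := (Finset.Icc m n).filter (fun i => w.take i ∈ S) with hhit
  set hit' := (Finset.Icc (m - p) (n - p)).filter (fun j => (w.drop p).take j ∈ S) with hhit'
  have hsub : hit.image (· - p) ⊆ Finset.Icc (m - p) (n - p) \ hit' := by
    intro j hj
    simp only [Finset.mem_image] at hj
    obtain ⟨i, hi, rfl⟩ := hj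
    simp only [hhit, Finset.mem_filter, Finset.mem_Icc] at hi
    obtain ⟨⟨hmi, hin⟩, hiS⟩ := hi
    have hip : p ≤ i := le_of_lt (lt_of_lt_of_le hm hmi)
    have hdec : w.take i = t ++ (w.drop p).take (i - p) := by
      rw [← htake, ← List.take_add]
      congr 1
      omega
    have hnotS : (w.drop p).take (i - p) ∉ S := by
      intro hmem
      exact hPF t ht _ hmem (hdec ▸ hiS)
    rw [Finset.mem_sdiff]
    constructor
    · rw [Finset.mem_Icc]; omega
    · simp only [hhit', Finset.mem_filter]
      tauto
  have hinj : Set.InjOn (· - p) hit := by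
    intro i hi j hj hij
    rw [Finset.mem_coe, hhit, Finset.mem_filter, Finset.mem_Icc] at hi hj
    have hij' : i - p = j - p := hij
    omega
  have h1 : hit.card ≤ (Finset.Icc (m - p) (n - p) \ hit').card := by
    rw [← Finset.card_image_of_injOn hinj]
    exact Finset.card_le_card hsub
  have h2 : hit' ⊆ Finset.Icc (m - p) (n - p) := Finset.filter_subset _ _
  have h3 : (Finset.Icc (m - p) (n - p) \ hit').card
      = (Finset.Icc (m - p) (n - p)).card - hit'.card := Finset.card_sdiff_of_subset h2
  have h4 := Finset.card_le_card h2
  rw [Nat.card_Icc] at h3 h4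
  show hit.card + hit'.card ≤ n - m + 1
  omega

theorem main_count {A : Type*} [Fintype A] {S : Set (List A)} (hPF : ProductFree S)
    (T : Finset (List A)) (hTpf : ∀ t ∈ T, ∀ t' ∈ T, t <+: t' → t = t')
    (hTS : ∀ t ∈ T, t ∈ S) {m n : ℕ} (hTm : ∀ t ∈ T, t.length < m) (hmn : m ≤ n) :
    ∑ i ∈ Finset.Icc m n, (Sf S i).card * Fintype.card A ^ (n - i)
      + ∑ t ∈ T, ∑ j ∈ Finset.Icc (m - t.length) (n - t.length),
          (Sf S j).card * Fintype.card A ^ ((n - t.length) - j)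
      ≤ Fintype.card A ^ n * (n - m + 1) := by
  have step1 : ∀ t ∈ T, ∑ j ∈ Finset.Icc (m - t.length) (n - t.length),
      (Sf S j).card * Fintype.card A ^ ((n - t.length) - j)
      = ∑ w ∈ WW A n, (if t <+: w then
          Hn S (m - t.length) (n - t.length) (w.drop t.length) else 0) := by
    intro t ht
    rw [sum_prefix_cond (le_trans (le_of_lt (hTm t ht)) hmn) (Hn S (m - t.length) (n - t.length)),
      sum_Hn S (le_refl _)]
  rw [← sum_Hn S (le_refl n), Finset.sum_congr rfl step1, Finset.sum_comm,
    ← Finset.sum_add_distrib]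
  have hbound : ∀ w ∈ WW A n,
      Hn S m n w + ∑ t ∈ T, (if t <+: w then
        Hn S (m - t.length) (n - t.length) (w.drop t.length) else 0) ≤ n - m + 1 := by
    intro w hw
    rw [mem_WW] at hw
    rw [← Finset.sum_filter]
    rcases Finset.eq_empty_or_nonempty (T.filter (· <+: w)) with he | ⟨t, htmem⟩
    · rw [he, Finset.sum_empty]
      have : Hn S m n w ≤ (Finset.Icc m n).card := Finset.card_filter_le _ _
      rw [Nat.card_Icc] at this
      omega
    · have hfeq : T.filter (· <+: w) = {t} := by
        apply Finset.eq_singleton_iff_unique_mem.mpr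
        refine ⟨htmem, fun t' ht' => ?_⟩
        rw [Finset.mem_filter] at htmem ht'
        rcases List.prefix_or_prefix_of_prefix ht'.2 htmem.2 with hc | hc
        · exact hTpf t' ht'.1 t htmem.1 hc
        · exact (hTpf t htmem.1 t' ht'.1 hc).symm
      rw [hfeq, Finset.sum_singleton]
      rw [Finset.mem_filter] at htmem
      exact key_pointwise hPF (hTS t htmem.1) htmem.2 (hTm t htmem.1) hw
  calc ∑ w ∈ WW A n, (Hn S m n w + ∑ t ∈ T, (if t <+: w then
          Hn S (m - t.length) (n - t.length) (w.drop t.length) else 0))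
      ≤ ∑ w ∈ WW A n, (n - m + 1) := Finset.sum_le_sum hbound
    _ = Fintype.card A ^ n * (n - m + 1) := by rw [Finset.sum_const, card_WW, smul_eq_mul]

/-- layer density as Finset card. -/
noncomputable def dd {A : Type*} [Fintype A] (S : Set (List A)) (i : ℕ) : ℝ :=
  ((Sf S i).card : ℝ) / (Fintype.card A : ℝ) ^ i

/-- window density sum. -/
noncomputable def DD {A : Type*} [Fintype A] (S : Set (List A)) (m n : ℕ) : ℝ :=
  ∑ i ∈ Finset.Icc m n, dd S i

section RealSide

variable {A : Type*} [Fintype A] [Nonempty A] {S : Set (List A)}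

theorem qpos : (0 : ℝ) < (Fintype.card A : ℝ) := by
  exact_mod_cast Fintype.card_pos

theorem dd_nonneg (i : ℕ) : 0 ≤ dd S i := by
  apply div_nonneg (by positivity) (by positivity)

theorem dd_le_one (i : ℕ) : dd S i ≤ 1 := by
  rw [dd, div_le_one (by positivity)]
  calc ((Sf S i).card : ℝ) ≤ ((WW A i).card : ℝ) := by
        exact_mod_cast Finset.card_le_card (Finset.filter_subset _ _)
    _ = (Fintype.card A : ℝ) ^ i := by rw [card_WW]; push_cast; ring

theorem DD_nonneg (m n : ℕ) : 0 ≤ DD S m n :=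
  Finset.sum_nonneg fun i _ => dd_nonneg i

theorem DD_le_card (m n : ℕ) : DD S m n ≤ ((Finset.Icc m n).card : ℝ) := by
  calc DD S m n ≤ ∑ _i ∈ Finset.Icc m n, (1:ℝ) := Finset.sum_le_sum fun i _ => dd_le_one i
    _ = _ := by rw [Finset.sum_const]; simp

/-- Subwindow bound : `DD m n ≤ DD a b + (stuff outside)` for `Icc a b ⊆ Icc m n`. -/
theorem DD_le_sub_add {m n a b : ℕ} (h : Finset.Icc a b ⊆ Finset.Icc m n) :
    DD S m n ≤ DD S a b + (((Finset.Icc m n).card - (Finset.Icc a b).card : ℕ) : ℝ) := by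
  rw [DD, ← Finset.sum_sdiff h, DD]
  have h1 : ∑ i ∈ Finset.Icc m n \ Finset.Icc a b, dd S i
      ≤ ((Finset.Icc m n \ Finset.Icc a b).card : ℝ) := by
    calc ∑ i ∈ Finset.Icc m n \ Finset.Icc a b, dd S i
        ≤ ∑ _i ∈ Finset.Icc m n \ Finset.Icc a b, (1:ℝ) :=
          Finset.sum_le_sum fun i _ => dd_le_one i
      _ = _ := by rw [Finset.sum_const]; simp
  rw [Finset.card_sdiff_of_subset h] at h1
  linarith

/-- `DD` only drops by at most `p` under shifting the window down by `p`. -/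
theorem DD_shift {m n p : ℕ} (hpm : p ≤ m) (hmn : m ≤ n) :
    DD S m n - p ≤ DD S (m - p) (n - p) := by
  by_cases hc : m + p ≤ n
  · have hsub : Finset.Icc m (n - p) ⊆ Finset.Icc (m - p) (n - p) := by
      apply Finset.Icc_subset_Icc (by omega) le_rfl
    have h1 : DD S m (n - p) ≤ DD S (m - p) (n - p) := by
      simp only [DD]
      exact Finset.sum_le_sum_of_subset_of_nonneg hsub (fun i _ _ => dd_nonneg (S := S) i)
    have hsub2 : Finset.Icc m (n - p) ⊆ Finset.Icc m n :=
      Finset.Icc_subset_Icc le_rfl (by omega)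
    have h2 := DD_le_sub_add (S := S) hsub2
    rw [Nat.card_Icc, Nat.card_Icc] at h2
    have hcast : (((n + 1 - m) - (n - p + 1 - m) : ℕ) : ℝ) ≤ (p : ℝ) := by
      have hn : ((n + 1 - m) - (n - p + 1 - m) : ℕ) ≤ p := by omega
      exact_mod_cast hn
    linarith
  · have h1 : DD S m n ≤ ((Finset.Icc m n).card : ℝ) := DD_le_card m n
    rw [Nat.card_Icc] at h1
    have h2 : ((n + 1 - m : ℕ) : ℝ) ≤ (p : ℝ) := by
      have hn : (n + 1 - m : ℕ) ≤ p := by omega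
      exact_mod_cast hn
    have := DD_nonneg (S := S) (m - p) (n - p)
    linarith

/-- Real version of the main counting inequality. -/
theorem main_count_real (hPF : ProductFree S)
    (T : Finset (List A)) (hTpf : ∀ t ∈ T, ∀ t' ∈ T, t <+: t' → t = t')
    (hTS : ∀ t ∈ T, t ∈ S) {m n : ℕ} (hTm : ∀ t ∈ T, t.length < m) (hmn : m ≤ n) :
    DD S m n + ∑ t ∈ T, (1 / (Fintype.card A : ℝ) ^ t.length) * DD S (m - t.length) (n - t.length)
      ≤ (n : ℝ) - m + 1 := by
  have hq : (0:ℝ) < (Fintype.card A : ℝ) := qpos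
  have key := main_count hPF T hTpf hTS hTm hmn
  have cast1 : ∀ (a b c : ℕ), b ≤ c → ((∑ i ∈ Finset.Icc a b,
      (Sf S i).card * Fintype.card A ^ (c - i) : ℕ) : ℝ)
        = (Fintype.card A : ℝ) ^ c * DD S a b := by
    intro a b c hbc
    push_cast
    rw [DD, Finset.mul_sum]
    refine Finset.sum_congr rfl fun i hi => ?_
    have hic : i ≤ c := le_trans (Finset.mem_Icc.mp hi).2 hbc
    rw [dd, pow_sub₀ _ (ne_of_gt hq) hic]
    field_simp
  have hcast := (Nat.cast_le (α := ℝ)).mpr key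
  push_cast at hcast
  have e1 : ∀ i ∈ Finset.Icc m n, ((Sf S i).card : ℝ) * (Fintype.card A : ℝ) ^ (n - i)
      = (Fintype.card A : ℝ) ^ n * dd S i := by
    intro i hi
    rw [dd, pow_sub₀ _ (ne_of_gt hq) (le_trans (Finset.mem_Icc.mp hi).2 le_rfl)]
    field_simp
  have e2 : ∀ t ∈ T, ∀ j ∈ Finset.Icc (m - t.length) (n - t.length),
      ((Sf S j).card : ℝ) * (Fintype.card A : ℝ) ^ ((n - t.length) - j)
      = (Fintype.card A : ℝ) ^ (n - t.length) * dd S j := by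
    intro t ht j hj
    rw [dd, pow_sub₀ _ (ne_of_gt hq) (Finset.mem_Icc.mp hj).2]
    field_simp
  rw [Finset.sum_congr rfl e1, ← Finset.mul_sum] at hcast
  have e3 : ∀ t ∈ T, ∑ j ∈ Finset.Icc (m - t.length) (n - t.length),
      ((Sf S j).card : ℝ) * (Fintype.card A : ℝ) ^ ((n - t.length) - j)
      = (Fintype.card A : ℝ) ^ n *
          ((1 / (Fintype.card A : ℝ) ^ t.length) * DD S (m - t.length) (n - t.length)) := by
    intro t ht
    rw [Finset.sum_congr rfl (e2 t ht), ← Finset.mul_sum, ← DD,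
      pow_sub₀ _ (ne_of_gt hq) (le_trans (le_of_lt (hTm t ht)) hmn)]
    field_simp
  rw [Finset.sum_congr rfl e3, ← Finset.mul_sum] at hcast
  have hpow : (0:ℝ) < (Fintype.card A : ℝ) ^ n := by positivity
  have hL : ((n - m : ℕ) : ℝ) + 1 = (n:ℝ) - m + 1 := by rw [Nat.cast_sub hmn]
  rw [hL] at hcast
  have h' : (Fintype.card A:ℝ)^n * (DD S m n + ∑ t ∈ T,
      (1 / (Fintype.card A : ℝ) ^ t.length) * DD S (m - t.length) (n - t.length))
        ≤ (Fintype.card A:ℝ)^n * ((n:ℝ) - m + 1) := by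
    rw [mul_add]
    simp only [DD]
    exact hcast
  exact (mul_le_mul_iff_right₀ hpow).mp h'

end RealSide

section Core

variable {A : Type*} [Fintype A] [Nonempty A] {S : Set (List A)}

theorem DD_window_core (hPF : ProductFree S) (T : Finset (List A))
    (hTpf : ∀ t ∈ T, ∀ t' ∈ T, t <+: t' → t = t') (hTS : ∀ t ∈ T, t ∈ S)
    {M : ℕ} (hTM : ∀ t ∈ T, t.length ≤ M)
    {γ : ℝ} (hγ0 : 0 ≤ γ) (hγ1 : γ ≤ 1)
    (hγ : γ ≤ ∑ t ∈ T, 1 / (Fintype.card A : ℝ) ^ t.length)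
    {m n : ℕ} (hm : M < m) (hmn : m ≤ n) :
    (1 + γ) * DD S m n ≤ ((n : ℝ) - m + 1) + 2 * M := by
  have hmain := main_count_real hPF T hTpf hTS (fun t ht => lt_of_le_of_lt (hTM t ht) hm) hmn
  have hLpos : (0:ℝ) ≤ (n:ℝ) - m + 1 := by
    have : (m:ℝ) ≤ n := by exact_mod_cast hmn
    linarith
  have hsumnn : 0 ≤ ∑ t ∈ T, (1 / (Fintype.card A : ℝ) ^ t.length)
      * DD S (m - t.length) (n - t.length) := by
    apply Finset.sum_nonneg
    intro t ht
    have := DD_nonneg (S := S) (m - t.length) (n - t.length)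
    positivity
  by_cases hcase : DD S m n ≤ (M : ℝ)
  · have h0 := DD_nonneg (S := S) m n
    nlinarith
  · push_neg at hcase
    have hshift : ∀ t ∈ T, DD S m n - M ≤ DD S (m - t.length) (n - t.length) := by
      intro t ht
      have hpm : t.length ≤ m := le_of_lt (lt_of_le_of_lt (hTM t ht) hm)
      have h1 := DD_shift (S := S) hpm hmn
      have h2 : (t.length : ℝ) ≤ (M : ℝ) := by exact_mod_cast hTM t ht
      linarith
    have hsum2 : γ * (DD S m n - M) ≤ ∑ t ∈ T, (1 / (Fintype.card A : ℝ) ^ t.length)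
        * DD S (m - t.length) (n - t.length) := by
      calc γ * (DD S m n - M)
          ≤ (∑ t ∈ T, 1 / (Fintype.card A : ℝ) ^ t.length) * (DD S m n - M) :=
            mul_le_mul_of_nonneg_right hγ (by linarith)
        _ = ∑ t ∈ T, (1 / (Fintype.card A : ℝ) ^ t.length) * (DD S m n - M) :=
            Finset.sum_mul _ _ _
        _ ≤ ∑ t ∈ T, (1 / (Fintype.card A : ℝ) ^ t.length)
              * DD S (m - t.length) (n - t.length) := by
            refine Finset.sum_le_sum fun t ht => ?_
            have hq : (0:ℝ) < (Fintype.card A : ℝ) := qpos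
            exact mul_le_mul_of_nonneg_left (hshift t ht) (by positivity)
    have hM0 : (0:ℝ) ≤ (M:ℝ) := by positivity
    nlinarith

theorem DD_window_all (hPF : ProductFree S) (T : Finset (List A))
    (hTpf : ∀ t ∈ T, ∀ t' ∈ T, t <+: t' → t = t') (hTS : ∀ t ∈ T, t ∈ S)
    {M : ℕ} (hTM : ∀ t ∈ T, t.length ≤ M)
    {γ : ℝ} (hγ0 : 0 ≤ γ) (hγ1 : γ ≤ 1)
    (hγ : γ ≤ ∑ t ∈ T, 1 / (Fintype.card A : ℝ) ^ t.length)
    {m n : ℕ} (hmn : m ≤ n) :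
    (1 + γ) * DD S m n ≤ ((n : ℝ) - m + 1) + (4 * M + 4) := by
  have hM0 : (0:ℝ) ≤ (M:ℝ) := by positivity
  have hmr : (m:ℝ) ≤ (n:ℝ) := by exact_mod_cast hmn
  rcases lt_or_ge M m with h | h
  · have := DD_window_core hPF T hTpf hTS hTM hγ0 hγ1 hγ h hmn
    linarith
  · have hmM : (m:ℝ) ≤ (M:ℝ) := by exact_mod_cast h
    rcases le_or_gt n M with hn | hn
    · have h1 : DD S m n ≤ ((Finset.Icc m n).card : ℝ) := DD_le_card m n
      rw [Nat.card_Icc] at h1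
      have h2 : ((n + 1 - m : ℕ) : ℝ) = (n:ℝ) + 1 - m := by
        rw [Nat.cast_sub (by omega)]; push_cast; ring
      rw [h2] at h1
      have h3 : (n:ℝ) ≤ (M:ℝ) := by exact_mod_cast hn
      have h0 := DD_nonneg (S := S) m n
      nlinarith
    · have hMn : M + 1 ≤ n := hn
      have hsub : Finset.Icc (M+1) n ⊆ Finset.Icc m n := Finset.Icc_subset_Icc (by omega) le_rfl
      have h1 := DD_le_sub_add (S := S) hsub
      rw [Nat.card_Icc, Nat.card_Icc] at h1
      have h2 : (((n + 1 - m) - (n + 1 - (M+1)) : ℕ) : ℝ) ≤ (M:ℝ) + 1 := by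
        have : ((n + 1 - m) - (n + 1 - (M+1)) : ℕ) ≤ M + 1 := by omega
        calc (((n + 1 - m) - (n + 1 - (M+1)) : ℕ) : ℝ) ≤ ((M + 1 : ℕ) : ℝ) := by
              exact_mod_cast this
          _ = (M:ℝ) + 1 := by push_cast; ring
      have hcore := DD_window_core hPF T hTpf hTS hTM hγ0 hγ1 hγ (lt_add_one M) hMn
      have hDD1 : 0 ≤ DD S (M+1) n := DD_nonneg _ _
      have hMr : ((M:ℝ) + 1) = ((M + 1 : ℕ) : ℝ) := by push_cast; ring
      push_cast at hcore
      nlinarith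

end Core

section Limsup

variable {A : Type*} [Fintype A] [Nonempty A] {S : Set (List A)}

theorem banach_filter_neBot :
    (Filter.comap (fun p : ℕ × ℕ => p.2 - p.1) Filter.atTop).NeBot := by
  apply Filter.comap_neBot
  intro t ht
  rw [Filter.mem_atTop_sets] at ht
  obtain ⟨a, ha⟩ := ht
  exact ⟨(0, a), ha _ (by simp)⟩

theorem limsup_DD_le {c C : ℝ} (hc : 0 ≤ c) (hC : 0 ≤ C)
    (h : ∀ m n : ℕ, m ≤ n → DD S m n ≤ c * ((n:ℝ) - m + 1) + C) :
    Filter.limsup (fun p : ℕ × ℕ => DD S p.1 p.2 / ((p.2 - p.1 : ℕ) + 1))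
      (Filter.comap (fun p : ℕ × ℕ => p.2 - p.1) Filter.atTop) ≤ c := by
  have hNB := banach_filter_neBot
  set F := Filter.comap (fun p : ℕ × ℕ => p.2 - p.1) (Filter.atTop : Filter ℕ) with hF
  set g := fun p : ℕ × ℕ => DD S p.1 p.2 / ((p.2 - p.1 : ℕ) + 1) with hg
  have hgnn : ∀ p, 0 ≤ g p := by
    intro p
    apply div_nonneg (DD_nonneg _ _)
    positivity
  have hcob : Filter.IsCoboundedUnder (· ≤ ·) F g :=
    Filter.isCoboundedUnder_le_of_le F (x := 0) hgnn
  refine le_of_forall_pos_le_add fun ε hε => ?_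
  obtain ⟨R, hR⟩ := exists_nat_ge (C / ε)
  apply Filter.limsup_le_of_le hcob
  have hmem : {p : ℕ × ℕ | R + 1 ≤ p.2 - p.1} ∈ F := by
    rw [hF]
    exact Filter.preimage_mem_comap (Filter.mem_atTop (R + 1))
  filter_upwards [hmem] with p hp
  have hmn : p.1 ≤ p.2 := by
    rcases le_or_gt p.1 p.2 with h' | h'
    · exact h'
    · exfalso; have hp' : R + 1 ≤ p.2 - p.1 := hp; omega
  have hL : ((p.2 - p.1 : ℕ) : ℝ) + 1 = (p.2 : ℝ) - p.1 + 1 := by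
    rw [Nat.cast_sub hmn]
  have hLpos : (0:ℝ) < ((p.2 - p.1 : ℕ) : ℝ) + 1 := by positivity
  have hDD := h p.1 p.2 hmn
  have hgoal : g p = DD S p.1 p.2 / (((p.2 - p.1 : ℕ) : ℝ) + 1) := rfl
  rw [hgoal, div_le_iff₀ hLpos]
  have hRL : (C / ε) ≤ ((p.2 - p.1 : ℕ) : ℝ) + 1 := by
    have hp' : R + 1 ≤ p.2 - p.1 := hp
    have : ((R:ℝ) + 1) ≤ ((p.2 - p.1 : ℕ) : ℝ) + 1 := by
      exact_mod_cast by omega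
    linarith
  have hCe : C ≤ ε * (((p.2 - p.1 : ℕ) : ℝ) + 1) := by
    rw [div_le_iff₀ hε] at hRL
    linarith [hRL]
  calc DD S p.1 p.2 ≤ c * ((p.2:ℝ) - p.1 + 1) + C := hDD
    _ = c * (((p.2 - p.1 : ℕ) : ℝ) + 1) + C := by rw [hL]
    _ ≤ c * (((p.2 - p.1 : ℕ) : ℝ) + 1) + ε * (((p.2 - p.1 : ℕ) : ℝ) + 1) := by linarith
    _ = (c + ε) * (((p.2 - p.1 : ℕ) : ℝ) + 1) := by ring

end Limsup

theorem layerDensity_eq_dd {A : Type*} [Fintype A] (S : Set (List A)) (n : ℕ) :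
    layerDensity A S n = dd S n := layerDensity_eq_Sf S n


/-- If `S` is product-free and there are positive integers `ℓ_1 < ⋯ < ℓ_k` with
`d_S(ℓ_1) + d_S(ℓ_2; ℓ_1) + ⋯ + d_S(ℓ_k; ℓ_1,…,ℓ_{k-1}) ≥ 1 - 1/2^k`, then
`d*(S) ≤ 2^k / (2^{k+1} - 1)`. -/
theorem productFree_upperBanachDensity_le_of_sequence
    {A : Type*} [Fintype A] [Nonempty A] {S : Set (List A)}
    (hS : [] ∉ S) (hPF : ProductFree S)
    {k : ℕ} (hk : 1 ≤ k) (ℓ : Fin k → ℕ) (hmono : StrictMono ℓ) (hpos : ∀ i, 0 < ℓ i)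
    (hsum : 1 - 1 / 2 ^ k ≤ ∑ i, restrictedDensity A S (ℓ i) (ℓ '' {j | j < i})) :
    upperBanachDensity A S ≤ 2 ^ k / (2 ^ (k + 1) - 1) := by
  classical
  have hq : (0:ℝ) < (Fintype.card A : ℝ) := qpos
  -- the prefix-free code `T`
  set Ti : Fin k → Finset (List A) := fun i => (WW A (ℓ i)).filter
    (fun w => w ∈ S ∧ ∀ x ∈ S, x.length ∈ ℓ '' {j | j < i} → ¬ x <+: w) with hTi
  have hTi_mem : ∀ (i : Fin k) (w : List A), w ∈ Ti i ↔
      (w.length = ℓ i ∧ w ∈ S ∧ ∀ x ∈ S, x.length ∈ ℓ '' {j | j < i} → ¬ x <+: w) := by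
    intro i w
    rw [hTi]
    simp only [Finset.mem_filter, mem_WW]
  have hrd : ∀ i : Fin k, restrictedDensity A S (ℓ i) (ℓ '' {j | j < i})
      = ((Ti i).card : ℝ) / (Fintype.card A : ℝ) ^ (ℓ i) := by
    intro i
    rw [restrictedDensity]
    congr 2
    rw [show {w | w ∈ S ∧ w.length = ℓ i ∧ ∀ x ∈ S, x.length ∈ ℓ '' {j | j < i} → ¬ x <+: w}
        = (↑(Ti i) : Set (List A)) by
      ext w
      simp only [Set.mem_setOf_eq, Finset.coe_sort_coe, Finset.mem_coe, hTi_mem]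
      tauto]
    exact Set.ncard_coe_finset _
  set T : Finset (List A) := Finset.univ.biUnion Ti with hT
  have hlen : ∀ (i : Fin k), ∀ t ∈ Ti i, t.length = ℓ i := fun i t ht => ((hTi_mem i t).mp ht).1
  have hmemT : ∀ t ∈ T, ∃ i, t ∈ Ti i := by
    intro t ht
    rw [hT, Finset.mem_biUnion] at ht
    obtain ⟨i, _, hi⟩ := ht
    exact ⟨i, hi⟩
  have hTS : ∀ t ∈ T, t ∈ S := by
    intro t ht
    obtain ⟨i, hi⟩ := hmemT t ht
    exact ((hTi_mem i t).mp hi).2.1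
  set last : Fin k := ⟨k - 1, by omega⟩ with hlast
  set M : ℕ := ℓ last with hM
  have hTM : ∀ t ∈ T, t.length ≤ M := by
    intro t ht
    obtain ⟨i, hi⟩ := hmemT t ht
    rw [hlen i t hi, hM]
    exact hmono.monotone (show i ≤ last by
      rw [hlast, Fin.le_def]; exact Nat.le_pred_of_lt i.isLt)
  have hTpf : ∀ t ∈ T, ∀ t' ∈ T, t <+: t' → t = t' := by
    intro t ht t' ht' hpre
    obtain ⟨i, hi⟩ := hmemT t ht
    obtain ⟨j, hj⟩ := hmemT t' ht'
    have hli := hlen i t hi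
    have hlj := hlen j t' hj
    by_cases heq : ℓ i = ℓ j
    · exact hpre.eq_of_length (by rw [hli, hlj, heq])
    · have hlt : ℓ i < ℓ j := by
        have := hpre.length_le
        rw [hli, hlj] at this
        omega
      exfalso
      have hij : i < j := hmono.lt_iff_lt.mp hlt
      exact ((hTi_mem j t').mp hj).2.2 t (hTS t ht) ⟨i, hij, hli.symm⟩ hpre
  have hdisj : (↑(Finset.univ : Finset (Fin k)) : Set (Fin k)).PairwiseDisjoint Ti := by
    intro i _ j _ hij
    simp only [Function.onFun]
    rw [Finset.disjoint_left]
    intro t hti htj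
    exact hij (hmono.injective (by rw [← hlen i t hti, ← hlen j t htj]))
  have hkraft : ∑ t ∈ T, 1 / (Fintype.card A : ℝ) ^ t.length
      = ∑ i, restrictedDensity A S (ℓ i) (ℓ '' {j | j < i}) := by
    rw [hT, Finset.sum_biUnion hdisj]
    refine Finset.sum_congr rfl fun i _ => ?_
    rw [hrd i]
    rw [Finset.sum_congr rfl (fun t ht => by rw [hlen i t ht])]
    rw [Finset.sum_const, nsmul_eq_mul]
    ring
  set γ : ℝ := 1 - 1 / 2 ^ k with hγdef
  have h2k : (1:ℝ) ≤ 2 ^ k := one_le_pow₀ (by norm_num)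
  have h2k0 : (0:ℝ) < 2 ^ k := by positivity
  have hγ0 : 0 ≤ γ := by
    rw [hγdef]
    have : 1 / (2:ℝ) ^ k ≤ 1 := by rw [div_le_one h2k0]; exact h2k
    linarith
  have hγ1 : γ ≤ 1 := by
    rw [hγdef]
    have : 0 ≤ 1 / (2:ℝ) ^ k := by positivity
    linarith
  have hγ : γ ≤ ∑ t ∈ T, 1 / (Fintype.card A : ℝ) ^ t.length := by
    rw [hkraft]; exact hsum
  have h1γ : (0:ℝ) < 1 + γ := by linarith
  -- window bound
  have hwindow : ∀ m n : ℕ, m ≤ n → DD S m n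
      ≤ (1/(1+γ)) * ((n:ℝ) - m + 1) + (4 * (M:ℝ) + 4)/(1+γ) := by
    intro m n hmn
    have hwa := DD_window_all hPF T hTpf hTS hTM hγ0 hγ1 hγ hmn
    rw [div_mul_eq_mul_div, one_mul, ← add_div, le_div_iff₀ h1γ, mul_comm]
    exact hwa
  have hc0 : (0:ℝ) ≤ 1/(1+γ) := by positivity
  have hC0 : (0:ℝ) ≤ (4 * (M:ℝ) + 4)/(1+γ) := by positivity
  have hls := limsup_DD_le (S := S) hc0 hC0 hwindow
  have hfun : (fun p : ℕ × ℕ =>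
        (∑ i ∈ Finset.Icc p.1 p.2, layerDensity A S i) / ((p.2 - p.1 : ℕ) + 1))
      = (fun p : ℕ × ℕ => DD S p.1 p.2 / ((p.2 - p.1 : ℕ) + 1)) := by
    funext p
    congr 1
    rw [DD]
    exact Finset.sum_congr rfl fun i _ => layerDensity_eq_dd S i
  rw [upperBanachDensity, hfun]
  refine le_trans hls ?_
  -- final algebra : 1/(1+γ) = 2^k/(2^(k+1)-1)
  have he : 1 + γ = 2 - 1/2^k := by rw [hγdef]; ring
  have h2k1 : (0:ℝ) < 2 ^ (k+1) - 1 := by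
    have : (1:ℝ) ≤ 2 ^ (k+1) := one_le_pow₀ (by norm_num)
    have : (2:ℝ) ^ (k+1) = 2 * 2^k := by rw [pow_succ]; ring
    nlinarith
  have hhalf : 1/(2:ℝ)^k ≤ 1 := by rw [div_le_one h2k0]; exact h2k
  rw [he]
  rw [div_le_div_iff₀ (by linarith : (0:ℝ) < 2 - 1/2^k) h2k1]
  have hps : (2:ℝ) ^ (k+1) = 2 * 2^k := by rw [pow_succ]; ring
  rw [hps]
  field_simp
  exact le_rfl
end

section
/- Let A be a finite alphabet with |A| ≥ 2 and let φ = (√5 − 1)/2. For every ε > 0 there exist sets X, Y, Z ⊆ F_A, each with upper asymptotic density at least φ − ε, such that there are no solutions to x·y = z with x ∈ X, y ∈ Y and z ∈ Z. -/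
open Filter

namespace AsymAux
open scoped Classical

variable {A : Type*} [Fintype A]

/-- Length set: union of the blocks `(100^(2k+c)/3, 100^(2k+c)]`. -/
def Lset (c : ℕ) : Set ℕ := {n | ∃ k : ℕ, 100 ^ (2*k+c) < 3*n ∧ n ≤ 100 ^ (2*k+c)}

/-- Words whose length lies in `Lset c`. -/
def Sset (A : Type*) (c : ℕ) : Set (List A) := {w | w.length ∈ Lset c}

lemma layer_eq_range (n : ℕ) :
    {w : List A | w.length = n} =
      Set.range (List.Vector.toList : List.Vector A n → List A) := by
  ext w
  constructor
  · intro hw; exact ⟨⟨w, hw⟩, rfl⟩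
  · rintro ⟨v, rfl⟩; exact v.2

lemma layer_ncard (n : ℕ) :
    ({w : List A | w.length = n}).ncard = Fintype.card A ^ n := by
  rw [layer_eq_range, ← Set.image_univ,
    Set.ncard_image_of_injective _ List.Vector.toList_injective,
    Set.ncard_univ, Nat.card_eq_fintype_card, card_vector]

lemma layer_finite (n : ℕ) : ({w : List A | w.length = n}).Finite := by
  rw [layer_eq_range]; exact Set.finite_range _

lemma layerDensity_eq (hA : 1 ≤ Fintype.card A) (c n : ℕ) :
    layerDensity A (Sset A c) n = if n ∈ Lset c then 1 else 0 := by
  have hcard : (0:ℝ) < (Fintype.card A : ℝ) ^ n := by positivity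
  by_cases h : n ∈ Lset c
  · have hset : {w ∈ Sset A c | w.length = n} = {w : List A | w.length = n} := by
      ext w; simp only [Set.mem_setOf_eq, Sset]
      exact ⟨fun hw => hw.2, fun hw => ⟨hw ▸ h, hw⟩⟩
    rw [layerDensity, hset, layer_ncard, if_pos h]
    push_cast
    field_simp
  · have hset : {w ∈ Sset A c | w.length = n} = (∅ : Set (List A)) := by
      ext w; simp only [Set.mem_setOf_eq, Sset, Set.mem_empty_iff_false, iff_false]
      rintro ⟨hw, rfl⟩; exact h hw
    rw [layerDensity, hset, if_neg h, Set.ncard_empty]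
    simp

lemma layerDensity_le_one (hA : 1 ≤ Fintype.card A) (S : Set (List A)) (n : ℕ) :
    layerDensity A S n ≤ 1 := by
  have hcard : (0:ℝ) < (Fintype.card A : ℝ) ^ n := by positivity
  rw [layerDensity, div_le_one hcard]
  have hsub : {w ∈ S | w.length = n} ⊆ {w : List A | w.length = n} := fun w hw => hw.2
  have := Set.ncard_le_ncard hsub (layer_finite n)
  calc (({w ∈ S | w.length = n} : Set (List A)).ncard : ℝ)
      ≤ (({w : List A | w.length = n}).ncard : ℝ) := by exact_mod_cast this
    _ = (Fintype.card A : ℝ) ^ n := by rw [layer_ncard]; push_cast; ring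

lemma key (a b j k i : ℕ) (hj1 : 100^(2*j+2) < 3*a) (hj2 : a ≤ 100^(2*j+2))
    (hk1 : 100^(2*k+2) < 3*b) (hk2 : b ≤ 100^(2*k+2))
    (hi1 : 100^(2*i+1) < 3*(a+b)) (hi2 : a + b ≤ 100^(2*i+1)) : False := by
  set m := max j k with hm
  have pj : (100:ℕ)^(2*j+2) ≤ 100^(2*m+2) :=
    Nat.pow_le_pow_right (by norm_num) (by omega)
  have pk : (100:ℕ)^(2*k+2) ≤ 100^(2*m+2) :=
    Nat.pow_le_pow_right (by norm_num) (by omega)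
  have h1 : 100^(2*m+2) < 3*(a+b) := by
    rcases max_choice j k with h | h
    · have e : (100:ℕ)^(2*m+2) = 100^(2*j+2) := by rw [hm, h]
      linarith
    · have e : (100:ℕ)^(2*m+2) = 100^(2*k+2) := by rw [hm, h]
      linarith
  have h2 : a + b ≤ 2 * 100^(2*m+2) := by linarith
  rcases le_or_gt i m with h | h
  · have hle : (100:ℕ)^(2*i+1) ≤ 100^(2*m+1) :=
      Nat.pow_le_pow_right (by norm_num) (by omega)
    have e : (100:ℕ)^(2*m+2) = 100^(2*m+1) * 100 := by ring
    linarith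
  · have hge : (100:ℕ)^(2*m+2) * 100 ≤ 100^(2*i+1) := by
      calc (100:ℕ)^(2*m+2)*100 = 100^(2*m+3) := by ring
      _ ≤ 100^(2*i+1) := Nat.pow_le_pow_right (by norm_num) (by omega)
    linarith

lemma density_at (hA : 1 ≤ Fintype.card A) (c K : ℕ) :
    (2:ℝ)/3 ≤ (∑ i ∈ Finset.Icc 1 (100^(2*K+c)), layerDensity A (Sset A c) i) /
      (100^(2*K+c) : ℕ) := by
  set n := 100^(2*K+c) with hn
  have hn0 : 0 < n := by positivity
  have hsum : ∑ i ∈ Finset.Icc 1 n, layerDensity A (Sset A c) i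
      = ∑ i ∈ Finset.Icc 1 n, (if i ∈ Lset c then (1:ℝ) else 0) := by
    exact Finset.sum_congr rfl fun i _ => layerDensity_eq hA c i
  have hsub : Finset.Ioc (n/3) n ⊆ Finset.Icc 1 n := by
    intro i hi
    simp only [Finset.mem_Ioc, Finset.mem_Icc] at hi ⊢
    omega
  have hmem : ∀ i ∈ Finset.Ioc (n/3) n, (if i ∈ Lset c then (1:ℝ) else 0) = 1 := by
    intro i hi
    simp only [Finset.mem_Ioc] at hi
    have h3 : n < 3 * i := by omega
    exact if_pos ⟨K, by rw [← hn]; exact h3, by rw [← hn]; exact hi.2⟩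
  have hlow : ((n - n/3 : ℕ) : ℝ) ≤ ∑ i ∈ Finset.Icc 1 n, (if i ∈ Lset c then (1:ℝ) else 0) := by
    have := Finset.sum_le_sum_of_subset_of_nonneg
      (f := fun i => if i ∈ Lset c then (1:ℝ) else 0) hsub (fun i _ _ => by positivity)
    calc ((n - n/3 : ℕ) : ℝ) = ∑ i ∈ Finset.Ioc (n/3) n, (if i ∈ Lset c then (1:ℝ) else 0) := by
          rw [Finset.sum_congr rfl hmem, Finset.sum_const, Nat.card_Ioc]
          simp
      _ ≤ _ := this
  have hcast : ((n/3 : ℕ) : ℝ) ≤ (n : ℝ) / 3 := Nat.cast_div_le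
  have hnR : (0:ℝ) < (n:ℝ) := by exact_mod_cast hn0
  rw [hsum, le_div_iff₀ hnR]
  have : ((n - n/3 : ℕ) : ℝ) = (n:ℝ) - ((n/3:ℕ):ℝ) := by
    have := Nat.div_le_self n 3
    push_cast [Nat.cast_sub this]
    ring
  linarith [hlow, hcast, this]

lemma density_ge (hA : 1 ≤ Fintype.card A) (c : ℕ) :
    (2:ℝ)/3 ≤ upperAsympDensity A (Sset A c) := by
  apply Filter.le_limsup_of_frequently_le
  · rw [Filter.frequently_atTop]
    intro N
    refine ⟨100^(2*N+c), ?_, ?_⟩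
    · have := Nat.lt_pow_self (a := 100) (n := 2*N+c) (by norm_num)
      omega
    · exact density_at hA c N
  · refine ⟨1, Filter.eventually_atTop.2 ⟨1, fun n hn => ?_⟩⟩
    have hsum : ∑ i ∈ Finset.Icc 1 n, layerDensity A (Sset A c) i ≤ (n : ℝ) := by
      calc ∑ i ∈ Finset.Icc 1 n, layerDensity A (Sset A c) i
          ≤ ∑ i ∈ Finset.Icc 1 n, (1:ℝ) :=
            Finset.sum_le_sum fun i _ => layerDensity_le_one hA _ i
        _ = (n : ℝ) := by rw [Finset.sum_const, Nat.card_Icc]; simp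
    have hnR : (0:ℝ) < (n:ℝ) := by exact_mod_cast hn
    simp only [Set.mem_setOf_eq]
    rw [div_le_one hnR]
    exact hsum

lemma nil_not_mem (c : ℕ) : ([] : List A) ∉ Sset A c := by
  simp only [Sset, Lset, Set.mem_setOf_eq, List.length_nil]
  rintro ⟨k, hk, -⟩
  simp at hk

lemma phi_le : (Real.sqrt 5 - 1) / 2 ≤ (2:ℝ)/3 := by
  have h5 : Real.sqrt 5 ^ 2 = 5 := Real.sq_sqrt (by norm_num)
  have hnn : 0 ≤ Real.sqrt 5 := Real.sqrt_nonneg 5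
  nlinarith

end AsymAux

/-- For an alphabet of size at least 2 and any `ε > 0`, there are sets `X, Y, Z` in the
free semigroup, each of upper asymptotic density at least `φ - ε` (where
`φ = (√5 - 1)/2`), with no solutions to `x ⬝ y = z`, `x ∈ X`, `y ∈ Y`, `z ∈ Z`. -/
theorem asymmetric_construction
    {A : Type*} [Fintype A] (hA : 2 ≤ Fintype.card A) {ε : ℝ} (hε : 0 < ε) :
    ∃ X Y Z : Set (List A), [] ∉ X ∧ [] ∉ Y ∧ [] ∉ Z ∧
      (Real.sqrt 5 - 1) / 2 - ε ≤ upperAsympDensity A X ∧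
      (Real.sqrt 5 - 1) / 2 - ε ≤ upperAsympDensity A Y ∧
      (Real.sqrt 5 - 1) / 2 - ε ≤ upperAsympDensity A Z ∧
      ∀ x ∈ X, ∀ y ∈ Y, x ++ y ∉ Z := by
  have hA1 : 1 ≤ Fintype.card A := le_trans (by norm_num) hA
  refine ⟨AsymAux.Sset A 2, AsymAux.Sset A 2, AsymAux.Sset A 1,
    AsymAux.nil_not_mem 2, AsymAux.nil_not_mem 2, AsymAux.nil_not_mem 1, ?_, ?_, ?_, ?_⟩
  · linarith [AsymAux.density_ge hA1 (A := A) 2, AsymAux.phi_le]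
  · linarith [AsymAux.density_ge hA1 (A := A) 2, AsymAux.phi_le]
  · linarith [AsymAux.density_ge hA1 (A := A) 1, AsymAux.phi_le]
  · rintro x ⟨j, hj1, hj2⟩ y ⟨k, hk1, hk2⟩ hz
    obtain ⟨i, hi1, hi2⟩ := hz
    rw [List.length_append] at hi1 hi2
    exact AsymAux.key x.length y.length j k i hj1 hj2 hk1 hk2 hi1 hi2
end
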